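/- arXiv:1805.09636 — 12 statements merged into one kernel-verified Lean document; each statement's English description precedes it below -/
import Mathlib

section
/- Let p ≥ 5 be a prime, let k be a field of characteristic p, and let a, b, λ ∈ k. Suppose there exists a rational function Z₀ ∈ k(x) whose derivative equals (the image in k(x) of) the polynomial λ·(x³ + a·x + b)^{(p-1)/2} − x^{p-1}. Then λ·H(a,b) = 1, where H(a,b) denotes the coefficient of x^{p-1} in (x³ + a·x + b)^{(p-1)/2} ∈ k[x]; in particular H(a,b) ≠ 0. -/
/-!
Write `g = λ f^((p-1)/2) - x^(p-1)`. Multiplying the quotient rule by `d^(p-2)` and using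
`p - 1 = -1` in `k` shows that `g d^p` is the derivative of the polynomial `n d^(p-1)`.
In characteristic `p` a derivative has zero coefficient in every degree `≡ -1 (mod p)`,
while `d^p` only has monomials of degree divisible by `p`. Since `deg g < 2p - 1`, the
coefficient of `g d^p` in degree `p - 1 + p deg d` is `g_(p-1) lc(d)^p`, so `g_(p-1) = 0`,
i.e. `λ H(a, b) = 1`.
-/

open Polynomial

namespace Polynomial

variable {R : Type*} [CommRing R] (p : ℕ)

theorem derivative_mul_pow_sub_one_of_charP [CharP R p] (hp : 2 ≤ p) (n d : R[X]) :
    derivative (n * d ^ (p - 1)) = d ^ (p - 2) * (derivative n * d - n * derivative d) := by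
  have hcast : C ((p - 1 : ℕ) : R) = -1 := by
    rw [Nat.cast_sub (by omega), CharP.cast_eq_zero, Nat.cast_one, zero_sub, map_neg, map_one]
  rw [derivative_mul, derivative_pow, hcast]
  obtain ⟨q, rfl⟩ : ∃ q, p = q + 2 := ⟨p - 2, by omega⟩
  simp only [Nat.add_sub_cancel, show q + 2 - 1 = q + 1 by omega]
  ring

theorem coeff_pow_expChar_eq_zero_of_not_dvd [ExpChar R p] (d : R[X]) {j : ℕ} (hj : ¬ p ∣ j) :
    (d ^ p).coeff j = 0 := by
  rw [← map_frobenius_expand, coeff_map, coeff_expand (expChar_pos R p), if_neg hj, map_zero]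

theorem coeff_mul_pow_expChar_of_natDegree_lt [ExpChar R p] {g : R[X]} (d : R[X])
    (hg : g.natDegree < 2 * p - 1) :
    (g * d ^ p).coeff (p - 1 + p * d.natDegree) = g.coeff (p - 1) * d.leadingCoeff ^ p := by
  have hp : 0 < p := expChar_pos R p
  have hsupport : ∀ j, (d ^ p).coeff j ≠ 0 → ∃ l ≤ d.natDegree, j = p * l := by
    intro j hj
    obtain ⟨l, rfl⟩ : p ∣ j := not_not.mp (mt (coeff_pow_expChar_eq_zero_of_not_dvd p d) hj)
    refine ⟨l, not_lt.mp fun hl => hj (coeff_eq_zero_of_natDegree_lt ?_), rfl⟩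
    exact natDegree_pow_le.trans_lt (Nat.mul_lt_mul_left hp |>.mpr hl)
  rw [coeff_mul, Finset.sum_eq_single (p - 1, p * d.natDegree)]
  · rw [coeff_pow_of_natDegree_le le_rfl, leadingCoeff]
  · rintro ⟨i, j⟩ hij hne
    rw [Finset.HasAntidiagonal.mem_antidiagonal] at hij
    by_cases hj : (d ^ p).coeff j = 0
    · rw [hj, mul_zero]
    obtain ⟨l, hl, rfl⟩ := hsupport j hj
    have hl : p * (l + 1) ≤ p * d.natDegree :=
      Nat.mul_le_mul_left p (hl.lt_of_ne fun h => hne (by subst h; exact Prod.ext (by omega) rfl))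
    rw [coeff_eq_zero_of_natDegree_lt (hg.trans_le (by rw [Nat.mul_succ] at hl; omega)), zero_mul]
  · exact fun h => (h (Finset.HasAntidiagonal.mem_antidiagonal.mpr rfl)).elim

theorem coeff_sub_one_eq_zero_of_derivative_eq_mul_pow [NoZeroDivisors R] [CharP R p]
    [Fact p.Prime] {f g d : R[X]} (hd : d ≠ 0) (hf : derivative f = g * d ^ p)
    (hg : g.natDegree < 2 * p - 1) : g.coeff (p - 1) = 0 := by
  have hcast : ((p - 1 + p * d.natDegree : ℕ) : R) + 1 = 0 := by
    rw [← Nat.cast_add_one, show p - 1 + p * d.natDegree + 1 = p * (d.natDegree + 1) by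
      have := (Fact.out : p.Prime).pos; rw [Nat.mul_succ]; omega, Nat.cast_mul,
      CharP.cast_eq_zero, zero_mul]
  have hvanish : (derivative f).coeff (p - 1 + p * d.natDegree) = 0 := by
    rw [coeff_derivative, hcast, mul_zero]
  rw [hf, coeff_mul_pow_expChar_of_natDegree_lt p d hg] at hvanish
  exact (mul_eq_zero.mp hvanish).resolve_right (pow_ne_zero _ (leadingCoeff_ne_zero.mpr hd))

theorem natDegree_C_mul_cubic_pow_sub_X_pow_lt (lam a b : R) (hp : 0 < p) :
    (C lam * (X ^ 3 + C a * X + C b) ^ ((p - 1) / 2) - X ^ (p - 1)).natDegree < 2 * p - 1 := by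
  have hcubic : (X ^ 3 + C a * X + C b : R[X]).natDegree ≤ 3 := by compute_degree
  refine (natDegree_sub_le _ _).trans_lt (max_lt ?_ ?_)
  · calc (C lam * (X ^ 3 + C a * X + C b) ^ ((p - 1) / 2)).natDegree
        ≤ (p - 1) / 2 * 3 := (natDegree_C_mul_le _ _).trans
          (natDegree_pow_le.trans (Nat.mul_le_mul_left _ hcubic))
      _ < 2 * p - 1 := by omega
  · exact (natDegree_X_pow_le _).trans_lt (by omega)

end Polynomial

/-- `n / d` has derivative `g` iff `n' * d - n * d' = g * d ^ 2`; this is how a rational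
primitive `Z₀ ∈ k(x)` is encoded. -/
theorem eigenvalue_is_inverse_Hasse_mod_p_general
    (p : ℕ) (hp : p.Prime)
    (k : Type*) [Field k] [CharP k p] (a b lam : k)
    (hZ : ∃ n d : k[X], d ≠ 0 ∧
      derivative n * d - n * derivative d =
        (C lam * ((X : k[X]) ^ 3 + C a * X + C b) ^ ((p - 1) / 2) - (X : k[X]) ^ (p - 1))
          * d ^ 2) :
    lam * ((((X : k[X]) ^ 3 + C a * X + C b) ^ ((p - 1) / 2)).coeff (p - 1)) = 1 ∧
      (((X : k[X]) ^ 3 + C a * X + C b) ^ ((p - 1) / 2)).coeff (p - 1) ≠ 0 := by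
  obtain ⟨n, d, hd, hquotient⟩ := hZ
  have : Fact p.Prime := ⟨hp⟩
  have hderivative : derivative (n * d ^ (p - 1)) =
      (C lam * (X ^ 3 + C a * X + C b) ^ ((p - 1) / 2) - X ^ (p - 1)) * d ^ p := by
    rw [derivative_mul_pow_sub_one_of_charP p hp.two_le, hquotient, mul_left_comm, ← pow_add,
      Nat.sub_add_cancel hp.two_le]
  have hcoeff := coeff_sub_one_eq_zero_of_derivative_eq_mul_pow p hd hderivative
    (natDegree_C_mul_cubic_pow_sub_X_pow_lt p lam a b hp.pos)
  rw [coeff_sub, coeff_C_mul, coeff_X_pow_self, sub_eq_zero] at hcoeff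
  exact ⟨hcoeff, right_ne_zero_of_mul_eq_one hcoeff⟩

/-- The derivative of the rational function `n / d` (with `d ≠ 0`) equals a polynomial `g`
iff `n' * d - n * d' = g * d ^ 2` by the quotient rule; we encode "there exists a rational
function `Z₀ ∈ k(x)` with derivative `g`" via such a representation. -/
theorem eigenvalue_is_inverse_Hasse_mod_p
    (p : ℕ) (hp : p.Prime) (hp5 : 5 ≤ p)
    (k : Type*) [Field k] [CharP k p] (a b lam : k)
    (hZ : ∃ n d : k[X], d ≠ 0 ∧
      derivative n * d - n * derivative d =
        (C lam * ((X : k[X]) ^ 3 + C a * X + C b) ^ ((p - 1) / 2) - (X : k[X]) ^ (p - 1))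
          * d ^ 2) :
    lam * ((((X : k[X]) ^ 3 + C a * X + C b) ^ ((p - 1) / 2)).coeff (p - 1)) = 1 ∧
      (((X : k[X]) ^ 3 + C a * X + C b) ^ ((p - 1) / 2)).coeff (p - 1) ≠ 0 :=
  eigenvalue_is_inverse_Hasse_mod_p_general p hp k a b lam hZ
end

section
/- Let p ≥ 5 be a prime and let k be a field of characteristic p. Let a, b ∈ k with 4a³ + 27b² ≠ 0, set f := x³ + a·x + b ∈ k[x], and assume h := (the coefficient of x^{p-1} in f^{(p-1)/2}) is nonzero. Let κ ∈ ℤ[A,B,X] be the unique polynomial with p·κ = X^{3p} + A^p·X^p + B^p − (X³ + A·X + B)^p, and let K₀ ∈ k[x] be obtained from κ by mapping A ↦ a, B ↦ b, X ↦ x. Let Z ∈ k[x] be any polynomial whose derivative equals h⁻¹·f^{(p-1)/2} − x^{p-1}. Then there exist μ₀, μ₁, μ₂ ∈ k such that f^{(p+1)/2} divides K₀ + (3x² + a)^p · (Z + μ₀ + μ₁·x^p + μ₂·x^{2p}) in k[x]. -/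
/-!
Write `W` for the polynomial whose divisibility is claimed and `f' = 3x² + a`. Differentiating the
defining identity of `κ` over `ℤ` and using the hypothesis on `Z'`, every term involving `μ` or a
`p`-th power drops out and `W' = h⁻¹ f'^p f^((p-1)/2) - f^(p-1) f'`, so `f^((p-1)/2) ∣ W'` whatever
`μ` is. Since `f` is separable (its discriminant is nonzero), `f^j ∣ W` and `f^j ∣ W'` with
`0 < j < p` force `f^(j+1) ∣ W`; hence it suffices to choose `μ` with `f ∣ W`. Modulo `f` the factor
`f'^p` is a unit, and `1, x^p, x^(2p)` are linearly independent: if `f ∣ g(x^p)` with `deg g < 3`,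
then over a perfect closure `g(x^p) = g̃^p`, so the squarefree `f` divides `g̃`, whence `g = 0`.
By dimension count they span `k[x]/(f)`, which gives `μ`.
-/

open Polynomial

theorem derivative_expand_eq_zero {R : Type*} [CommRing R] (p : ℕ) [CharP R p] (g : R[X]) :
    derivative (expand R p g) = 0 := by
  simp [derivative_expand]

theorem derivative_pow_char_eq_zero {R : Type*} [CommRing R] (p : ℕ) [CharP R p] (g : R[X]) :
    derivative (g ^ p) = 0 := by
  simp [derivative_pow]

theorem derivative_aeval_eq_aeval_pderiv {σ S R : Type*} [CommRing S] [CommRing R] [Algebra S R]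
    [DecidableEq σ] (v : σ → R[X]) (j : σ)
    (hv : ∀ i, derivative (v i) = (Pi.single j 1 : σ → R[X]) i)
    (q : MvPolynomial σ S) :
    derivative (MvPolynomial.aeval v q) = MvPolynomial.aeval v (MvPolynomial.pderiv j q) := by
  induction q using MvPolynomial.induction_on with
  | C s => simp [Polynomial.algebraMap_apply]
  | add q r hq hr => simp [hq, hr]
  | mul_X q i hq =>
    simp only [map_mul, derivative_mul, hq, hv, MvPolynomial.aeval_X, Derivation.leibniz,
      MvPolynomial.pderiv_X, Pi.single_apply, smul_eq_mul, map_add]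
    split_ifs <;> simp [mul_comm, add_comm]

theorem expand_eq_of_degree_lt_three {R : Type*} [CommRing R] (p : ℕ) {g : R[X]}
    (hg : g.degree < 3) :
    expand R p g = C (g.coeff 0) + C (g.coeff 1) * X ^ p + C (g.coeff 2) * X ^ (2 * p) := by
  obtain rfl | hg0 := eq_or_ne g 0
  · simp
  conv_lhs => rw [g.as_sum_range_C_mul_X_pow' ((natDegree_lt_iff_degree_lt hg0).mpr hg)]
  simp [Finset.sum_range_succ, pow_mul']

namespace Polynomial.Separable

variable {k : Type*} [Field k] {f W : k[X]}

theorem pow_add_two_dvd_of_pow_succ_dvd (hf : f.Separable) {j : ℕ} (hj : ((j + 1 : ℕ) : k) ≠ 0)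
    (hW : f ^ (j + 1) ∣ W) (hW' : f ^ (j + 1) ∣ derivative W) : f ^ (j + 2) ∣ W := by
  obtain ⟨u, rfl⟩ := hW
  have hderiv : derivative (f ^ (j + 1) * u)
      = f ^ j * (C ((j + 1 : ℕ) : k) * derivative f * u + f * derivative u) := by
    rw [derivative_mul, derivative_pow, Nat.add_sub_cancel]
    ring
  rw [hderiv, pow_succ, mul_dvd_mul_iff_left (pow_ne_zero _ hf.ne_zero)] at hW'
  have hcop : IsCoprime f (C ((j + 1 : ℕ) : k) * derivative f) :=
    (isCoprime_mul_unit_left_right (isUnit_C.mpr (Ne.isUnit hj)) _ _).mpr hf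
  have hu : f ∣ u :=
    hcop.dvd_of_dvd_mul_left ((dvd_add_left (dvd_mul_right f _)).mp hW')
  rw [pow_succ]
  exact mul_dvd_mul_left _ hu

theorem pow_succ_dvd_of_pow_dvd_derivative (p : ℕ) [CharP k p] (hf : f.Separable) {n : ℕ}
    (hn : n < p) (hW : f ∣ W) (hW' : f ^ n ∣ derivative W) : f ^ (n + 1) ∣ W := by
  induction n with
  | zero => simpa using hW
  | succ j ih =>
    have hj : ((j + 1 : ℕ) : k) ≠ 0 := by
      rw [Ne, CharP.cast_eq_zero_iff k p]
      exact fun h => by have := Nat.le_of_dvd j.succ_pos h; omega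
    exact hf.pow_add_two_dvd_of_pow_succ_dvd hj
      (ih (by omega) ((pow_dvd_pow f j.le_succ).trans hW')) hW'

theorem eq_zero_of_dvd_expand (p : ℕ) [ExpChar k p] (hf : f.Separable) {g : k[X]}
    (hg : g.degree < f.degree) (hdvd : f ∣ expand k p g) : g = 0 := by
  let K := AlgebraicClosure k
  have : ExpChar K p := expChar_of_injective_algebraMap (algebraMap k K).injective p
  set g' : K[X] := (g.map (algebraMap k K)).map (frobeniusEquiv K p).symm
  have hdvd' : f.map (algebraMap k K) ∣ g' ^ p := by
    rw [← polynomial_expand_eq, ← map_expand]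
    exact Polynomial.map_dvd _ hdvd
  have hg' : g' = 0 := by
    refine eq_zero_of_dvd_of_degree_lt
      (((hf.map).squarefree.dvd_pow_iff_dvd (expChar_pos K p).ne').mp hdvd') ?_
    simpa [g', degree_map] using hg
  simpa [g', Polynomial.map_eq_zero_iff (frobeniusEquiv K p).symm.toRingHom.injective,
    Polynomial.map_eq_zero_iff (algebraMap k K).injective] using hg'

theorem exists_dvd_add_mul_expand (p : ℕ) [ExpChar k p] (hf : f.Separable) {u : k[X]}
    (hu : IsCoprime f u) (W : k[X]) :
    ∃ g : k[X], g.degree < f.natDegree ∧ f ∣ W + u * expand k p g := by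
  let pb := AdjoinRoot.powerBasis hf.ne_zero
  have : FiniteDimensional k (AdjoinRoot f) := pb.finite
  let L : degreeLT k f.natDegree →ₗ[k] AdjoinRoot f :=
    (LinearMap.mulLeft k (AdjoinRoot.mk f u)).comp
      ((AdjoinRoot.mkₐ f).toLinearMap.comp ((expand k p).toLinearMap.comp (degreeLT k _).subtype))
  have hL : Function.Injective L := by
    refine (injective_iff_map_eq_zero L).mpr fun ⟨g, hg⟩ h => ?_
    rw [mem_degreeLT] at hg
    have hdvd : f ∣ u * expand k p g := by
      simpa [L, ← map_mul, AdjoinRoot.mk_eq_zero] using h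
    ext1
    exact hf.eq_zero_of_dvd_expand p (hg.trans_eq (degree_eq_natDegree hf.ne_zero).symm)
      (hu.dvd_of_dvd_mul_left hdvd)
  have hrank : Module.finrank k (degreeLT k f.natDegree) = Module.finrank k (AdjoinRoot f) := by
    rw [(degreeLTEquiv k _).finrank_eq, pb.finrank, AdjoinRoot.powerBasis_dim,
      Module.finrank_fin_fun]
  obtain ⟨⟨g, hg⟩, hLg⟩ :=
    (LinearMap.injective_iff_surjective_of_finrank_eq_finrank hrank).mp hL (-AdjoinRoot.mk f W)
  refine ⟨g, mem_degreeLT.mp hg, ?_⟩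
  rw [← AdjoinRoot.mk_eq_zero, map_add, map_mul]
  simpa [L, eq_neg_iff_add_eq_zero, add_comm] using hLg

end Polynomial.Separable

theorem derivative_X_pow_three_add_C_mul_X_add_C {R : Type*} [CommRing R] (a b : R) :
    derivative ((X : R[X]) ^ 3 + C a * X + C b) = 3 * X ^ 2 + C a := by
  simp only [derivative_add, derivative_X_pow, derivative_C_mul_X, derivative_C]
  norm_num [C_ofNat]

theorem separable_X_pow_three_add_C_mul_X_add_C {k : Type*} [Field k] {a b : k}
    (hab : 4 * a ^ 3 + 27 * b ^ 2 ≠ 0) : ((X : k[X]) ^ 3 + C a * X + C b).Separable := by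
  rw [Separable, derivative_X_pow_three_add_C_mul_X_add_C]
  -- Bezout coefficients for `f` and `f'`, scaled by the discriminant `4a³ + 27b²`
  refine ⟨C (4 * a ^ 3 + 27 * b ^ 2)⁻¹ * (C (-18 * a) * X + C (27 * b)),
    C (4 * a ^ 3 + 27 * b ^ 2)⁻¹ * (C (6 * a) * X ^ 2 - C (9 * b) * X + C (4 * a ^ 2)), ?_⟩
  have hC : C (4 * a ^ 3 + 27 * b ^ 2)⁻¹ * C (4 * a ^ 3 + 27 * b ^ 2) = (1 : k[X]) := by
    rw [← C_mul, inv_mul_cancel₀ hab, C_1]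
  rw [← hC]
  simp only [C_add, C_mul, C_pow, C_neg, C_ofNat]
  ring

theorem frobenius_three_mul_X_sq_add_C {k : Type*} [CommRing k] (p : ℕ) [ExpChar k p] (a : k) :
    (3 * (X : k[X]) ^ 2 + C a) ^ p = 3 * X ^ (2 * p) + C (a ^ p) := by
  rw [add_pow_expChar, mul_pow, ← C_pow, ← pow_mul, mul_comm 2 p]
  congr 2
  rw [← frobenius_def]
  exact map_ofNat _ 3

theorem pderiv_two_eq_of_natCast_mul_eq {p : ℕ} (hp : p ≠ 0) {κ : MvPolynomial (Fin 3) ℤ}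
    (hκ : (p : MvPolynomial (Fin 3) ℤ) * κ =
      (MvPolynomial.X 2) ^ (3 * p) + (MvPolynomial.X 0) ^ p * (MvPolynomial.X 2) ^ p
        + (MvPolynomial.X 1) ^ p
        - ((MvPolynomial.X 2) ^ 3 + MvPolynomial.X 0 * MvPolynomial.X 2
            + MvPolynomial.X 1) ^ p) :
    MvPolynomial.pderiv 2 κ =
      3 * (MvPolynomial.X 2) ^ (3 * p - 1)
        + (MvPolynomial.X 0) ^ p * (MvPolynomial.X 2) ^ (p - 1)
        - ((MvPolynomial.X 2) ^ 3 + MvPolynomial.X 0 * MvPolynomial.X 2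
            + MvPolynomial.X 1) ^ (p - 1)
          * (3 * (MvPolynomial.X 2) ^ 2 + MvPolynomial.X 0) := by
  apply mul_left_cancel₀ (Nat.cast_ne_zero.mpr hp : (p : MvPolynomial (Fin 3) ℤ) ≠ 0)
  have h := congrArg (MvPolynomial.pderiv 2) hκ
  rw [Derivation.leibniz, Derivation.map_natCast, smul_zero, add_zero, smul_eq_mul] at h
  rw [h]
  simp only [Derivation.leibniz, map_sub, map_add, MvPolynomial.pderiv_pow,
    MvPolynomial.pderiv_X_self, MvPolynomial.pderiv_X_of_ne (show (0 : Fin 3) ≠ 2 by decide),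
    MvPolynomial.pderiv_X_of_ne (show (1 : Fin 3) ≠ 2 by decide), smul_eq_mul, mul_one,
    mul_zero, add_zero]
  push_cast
  ring

theorem derivative_aeval_add_mul_expand {k : Type*} [Field k] (p : ℕ) [Fact p.Prime] [CharP k p]
    (a b : k) {κ : MvPolynomial (Fin 3) ℤ}
    (hκ : (p : MvPolynomial (Fin 3) ℤ) * κ =
      (MvPolynomial.X 2) ^ (3 * p) + (MvPolynomial.X 0) ^ p * (MvPolynomial.X 2) ^ p
        + (MvPolynomial.X 1) ^ p
        - ((MvPolynomial.X 2) ^ 3 + MvPolynomial.X 0 * MvPolynomial.X 2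
            + MvPolynomial.X 1) ^ p)
    (c : k) {Z : k[X]}
    (hZ : derivative Z = C c * ((X : k[X]) ^ 3 + C a * X + C b) ^ ((p - 1) / 2) - X ^ (p - 1))
    (g : k[X]) :
    derivative (MvPolynomial.aeval ![C a, C b, (X : k[X])] κ
        + (3 * (X : k[X]) ^ 2 + C a) ^ p * (Z + expand k p g))
      = C c * (3 * X ^ 2 + C a) ^ p * (X ^ 3 + C a * X + C b) ^ ((p - 1) / 2)
        - (X ^ 3 + C a * X + C b) ^ (p - 1) * (3 * X ^ 2 + C a) := by
  have hp := (Fact.out : p.Prime).pos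
  have hv : ∀ i, derivative (![C a, C b, (X : k[X])] i) = (Pi.single 2 1 : Fin 3 → k[X]) i := by
    intro i; fin_cases i <;> simp
  rw [derivative_add, derivative_aeval_eq_aeval_pderiv _ 2 hv,
    pderiv_two_eq_of_natCast_mul_eq hp.ne' hκ, derivative_mul, derivative_pow_char_eq_zero,
    derivative_add, derivative_expand_eq_zero, hZ, frobenius_three_mul_X_sq_add_C]
  have hX : (X : k[X]) ^ (3 * p - 1) = X ^ (2 * p) * X ^ (p - 1) := by
    rw [← pow_add]; congr 1; omega
  simp only [map_sub, map_add, map_mul, map_pow, map_ofNat, MvPolynomial.aeval_X,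
    Matrix.cons_val_zero, Matrix.cons_val_one, Matrix.cons_val_two, Matrix.head_cons,
    Matrix.tail_cons, hX]
  ring

theorem divisibility_step_extension_of_frobenius_lift_general
    (p : ℕ) (hp : p.Prime)
    (k : Type*) [Field k] [CharP k p] (a b : k)
    (hab : 4 * a ^ 3 + 27 * b ^ 2 ≠ 0)
    (κ : MvPolynomial (Fin 3) ℤ)
    (hκ : (p : MvPolynomial (Fin 3) ℤ) * κ =
      (MvPolynomial.X 2) ^ (3 * p) + (MvPolynomial.X 0) ^ p * (MvPolynomial.X 2) ^ p
        + (MvPolynomial.X 1) ^ p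
        - ((MvPolynomial.X 2) ^ 3 + MvPolynomial.X 0 * MvPolynomial.X 2
            + MvPolynomial.X 1) ^ p)
    (Z : k[X])
    (hZ : derivative Z =
      C (((((X : k[X]) ^ 3 + C a * X + C b) ^ ((p - 1) / 2)).coeff (p - 1))⁻¹)
        * ((X : k[X]) ^ 3 + C a * X + C b) ^ ((p - 1) / 2) - (X : k[X]) ^ (p - 1)) :
    ∃ μ₀ μ₁ μ₂ : k,
      ((X : k[X]) ^ 3 + C a * X + C b) ^ ((p + 1) / 2) ∣
        MvPolynomial.aeval ![C a, C b, (X : k[X])] κ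
          + (3 * (X : k[X]) ^ 2 + C a) ^ p
            * (Z + C μ₀ + C μ₁ * X ^ p + C μ₂ * X ^ (2 * p)) := by
  have : Fact p.Prime := ⟨hp⟩
  have hp1 := hp.one_le
  have hf := separable_X_pow_three_add_C_mul_X_add_C hab
  have hdeg : ((X : k[X]) ^ 3 + C a * X + C b).natDegree = 3 := by compute_degree!
  have hcop := hf.pow_right (n := p)
  rw [derivative_X_pow_three_add_C_mul_X_add_C] at hcop
  obtain ⟨g, hg, hdvd⟩ := hf.exists_dvd_add_mul_expand p hcop
    (MvPolynomial.aeval ![C a, C b, (X : k[X])] κ + (3 * X ^ 2 + C a) ^ p * Z)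
  rw [hdeg] at hg
  refine ⟨g.coeff 0, g.coeff 1, g.coeff 2, ?_⟩
  rw [add_assoc Z, add_assoc Z, ← expand_eq_of_degree_lt_three p hg,
    show (p + 1) / 2 = (p - 1) / 2 + 1 by omega]
  refine hf.pow_succ_dvd_of_pow_dvd_derivative p (by omega) (by rwa [mul_add, ← add_assoc]) ?_
  rw [derivative_aeval_add_mul_expand p a b hκ _ hZ]
  exact dvd_sub (dvd_mul_left _ _) (dvd_mul_of_dvd_left (pow_dvd_pow _ (by omega)) _)

theorem divisibility_step_extension_of_frobenius_lift
    (p : ℕ) (hp : p.Prime) (hp5 : 5 ≤ p)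
    (k : Type*) [Field k] [CharP k p] (a b : k)
    (hab : 4 * a ^ 3 + 27 * b ^ 2 ≠ 0)
    (hH : ((((X : k[X]) ^ 3 + C a * X + C b) ^ ((p - 1) / 2)).coeff (p - 1)) ≠ 0)
    (κ : MvPolynomial (Fin 3) ℤ)
    (hκ : (p : MvPolynomial (Fin 3) ℤ) * κ =
      (MvPolynomial.X 2) ^ (3 * p) + (MvPolynomial.X 0) ^ p * (MvPolynomial.X 2) ^ p
        + (MvPolynomial.X 1) ^ p
        - ((MvPolynomial.X 2) ^ 3 + MvPolynomial.X 0 * MvPolynomial.X 2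
            + MvPolynomial.X 1) ^ p)
    (Z : k[X])
    (hZ : derivative Z =
      C (((((X : k[X]) ^ 3 + C a * X + C b) ^ ((p - 1) / 2)).coeff (p - 1))⁻¹)
        * ((X : k[X]) ^ 3 + C a * X + C b) ^ ((p - 1) / 2) - (X : k[X]) ^ (p - 1)) :
    ∃ μ₀ μ₁ μ₂ : k,
      ((X : k[X]) ^ 3 + C a * X + C b) ^ ((p + 1) / 2) ∣
        MvPolynomial.aeval ![C a, C b, (X : k[X])] κ
          + (3 * (X : k[X]) ^ 2 + C a) ^ p
            * (Z + C μ₀ + C μ₁ * X ^ p + C μ₂ * X ^ (2 * p)) :=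
  divisibility_step_extension_of_frobenius_lift_general p hp k a b hab κ hκ Z hZ
end

section
/- Let p be a prime with p ≡ 1 mod 3 and let b ∈ ZMod p with b ≠ 0. Then the coefficient of X^{p-1} in (X³ + b)^{(p-1)/2} ∈ (ZMod p)[X] is nonzero. -/
open Polynomial

theorem hasse_value_nonzero_j_zero
    (p : ℕ) (hp : p.Prime) (hp3 : p % 3 = 1)
    (b : ZMod p) (hb : b ≠ 0) :
    (((X : (ZMod p)[X]) ^ 3 + C b) ^ ((p - 1) / 2)).coeff (p - 1) ≠ 0 := by
  have h2 := hp.two_le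
  have hp7 : 7 ≤ p := by
    by_contra hlt
    interval_cases p <;> first | omega | (revert hp; decide)
  have hodd : p % 2 = 1 := (Nat.Prime.eq_two_or_odd hp).elim (fun h => by omega) id
  set n := (p - 1) / 2 with hn
  set m := (p - 1) / 3 with hm
  have h3m : m * 3 = p - 1 := by omega
  have hmn : m ≤ n := by omega
  have hnp : n < p := by omega
  have key : (((X : (ZMod p)[X]) ^ 3 + C b) ^ n).coeff (p - 1)
      = b ^ (n - m) * (n.choose m : ZMod p) := by
    rw [add_pow, Polynomial.finset_sum_coeff]
    rw [Finset.sum_eq_single m]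
    · rw [← pow_mul, ← C_pow, ← Polynomial.C_eq_natCast, mul_assoc, ← C_mul,
        mul_comm ((X : (ZMod p)[X]) ^ (3 * m)), coeff_C_mul, coeff_X_pow]
      rw [if_pos (by omega)]
      ring
    · intro k hk hkm
      rw [← pow_mul, ← C_pow, ← Polynomial.C_eq_natCast, mul_assoc, ← C_mul,
        mul_comm ((X : (ZMod p)[X]) ^ (3 * k)), coeff_C_mul, coeff_X_pow]
      rw [if_neg (by omega)]
      ring
    · intro h
      exact absurd (Finset.mem_range.mpr (by omega)) h
  haveI : Fact p.Prime := ⟨hp⟩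
  rw [key]
  apply mul_ne_zero
  · exact pow_ne_zero _ hb
  · have : ¬ p ∣ n.choose m := by
      intro hdvd
      have hfac : p ∣ n.factorial := by
        rw [← Nat.choose_mul_factorial_mul_factorial hmn]
        exact (hdvd.mul_right _).mul_right _
      have := (Nat.Prime.dvd_factorial hp).mp hfac
      omega
    simpa [ZMod.natCast_eq_zero_iff] using this
end

section
/- Let p be a prime with p ≡ 1 mod 4 and let a ∈ ZMod p with a ≠ 0. Then the coefficient of X^{p-1} in (X³ + a·X)^{(p-1)/2} ∈ (ZMod p)[X] is nonzero. -/
open Polynomial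

theorem hasse_value_nonzero_j_1728
    (p : ℕ) (hp : p.Prime) (hp4 : p % 4 = 1)
    (a : ZMod p) (ha : a ≠ 0) :
    (((X : (ZMod p)[X]) ^ 3 + C a * X) ^ ((p - 1) / 2)).coeff (p - 1) ≠ 0 := by
  have hp2 : 2 ≤ p := hp.two_le
  haveI := Fact.mk hp
  obtain ⟨k, hk⟩ : ∃ k, p - 1 = 4 * k := ⟨(p - 1) / 4, by omega⟩
  have h1 : (p - 1) / 2 = 2 * k := by omega
  have hpoly : ((X : (ZMod p)[X]) ^ 3 + C a * X) ^ ((p - 1) / 2)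
      = X ^ (2 * k) * expand (ZMod p) 2 ((X + C a) ^ (2 * k)) := by
    rw [h1, map_pow, map_add, expand_X, expand_C, ← mul_pow]
    ring
  rw [hpoly]
  have h2 : p - 1 = 2 * k + 2 * k := by omega
  rw [h2, coeff_X_pow_mul, coeff_expand_mul' (by norm_num), coeff_X_add_C_pow]
  have hchoose : ((2 * k).choose k : ZMod p) ≠ 0 := by
    rw [Ne, ZMod.natCast_eq_zero_iff]
    intro hdvd
    have hdf : p ∣ (2 * k).factorial := by
      rw [← Nat.choose_mul_factorial_mul_factorial (Nat.le_mul_of_pos_left k (by norm_num))]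
      exact (hdvd.mul_right _).mul_right _
    have := (Nat.Prime.dvd_factorial hp).1 hdf
    omega
  exact mul_ne_zero (pow_ne_zero _ ha) hchoose
end

section
/- Let p ≥ 11 be a prime and let k be a field of characteristic p. Let a, b ∈ k with b ≠ 0, and let g : ℤ → k with g_s = 0 for all s ≥ 5 and all s ≤ 0. Let v : ℤ → k satisfy v_n = 0 for n < 0 and the relations 2s·b^p·v_s = (3 − 2s)·a^p·v_{s−1} + (9 − 2s)·v_{s−3} + g_s for all integers s with 1 ≤ s ≤ (p+7)/2 (integer coefficients being interpreted in k). Assume moreover that v_{(p+5)/2} = 0 and v_{(p+7)/2} = 0. Define w : ℤ → k by w_s = v_s for s ≤ (p+3)/2 and w_s = 0 for s > (p+3)/2. Then 2s·b^p·w_s = (3 − 2s)·a^p·w_{s−1} + (9 − 2s)·w_{s−3} + g_s holds for ALL integers s ≥ 1. -/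
open Polynomial

theorem truncated_solution_extends_to_full_system
    (p : ℕ) (hp : p.Prime) (hp11 : 11 ≤ p)
    (k : Type*) [Field k] [CharP k p] (a b : k) (hb : b ≠ 0)
    (g : ℤ → k) (hg5 : ∀ s : ℤ, 5 ≤ s → g s = 0) (hg0 : ∀ s : ℤ, s ≤ 0 → g s = 0)
    (v : ℤ → k) (hvneg : ∀ s : ℤ, s < 0 → v s = 0)
    (hv : ∀ s : ℤ, 1 ≤ s → s ≤ (((p + 7) / 2 : ℕ) : ℤ) →
      ((2 * s : ℤ) : k) * b ^ p * v s =
        ((3 - 2 * s : ℤ) : k) * a ^ p * v (s - 1)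
          + ((9 - 2 * s : ℤ) : k) * v (s - 3) + g s)
    (h1 : v (((p + 5) / 2 : ℕ) : ℤ) = 0) (h2 : v (((p + 7) / 2 : ℕ) : ℤ) = 0)
    (w : ℤ → k)
    (hw : ∀ s : ℤ, w s = if s ≤ (((p + 3) / 2 : ℕ) : ℤ) then v s else 0) :
    ∀ s : ℤ, 1 ≤ s →
      ((2 * s : ℤ) : k) * b ^ p * w s =
        ((3 - 2 * s : ℤ) : k) * a ^ p * w (s - 1)
          + ((9 - 2 * s : ℤ) : k) * w (s - 3) + g s := by
  obtain ⟨t, ht⟩ : Odd p := hp.odd_of_ne_two (by omega)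
  have ht5 : 5 ≤ t := by omega
  have h3 : (((p + 3) / 2 : ℕ) : ℤ) = (t : ℤ) + 2 := by
    rw [show (p + 3) / 2 = t + 2 by omega]; push_cast; ring
  have h5 : (((p + 5) / 2 : ℕ) : ℤ) = (t : ℤ) + 3 := by
    rw [show (p + 5) / 2 = t + 3 by omega]; push_cast; ring
  have h7 : (((p + 7) / 2 : ℕ) : ℤ) = (t : ℤ) + 4 := by
    rw [show (p + 7) / 2 = t + 4 by omega]; push_cast; ring
  have hw' : ∀ s : ℤ, w s = if s ≤ (t : ℤ) + 2 then v s else 0 := by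
    intro s; rw [hw, h3]
  have hv' : ∀ s : ℤ, 1 ≤ s → s ≤ (t : ℤ) + 4 →
      ((2 * s : ℤ) : k) * b ^ p * v s =
        ((3 - 2 * s : ℤ) : k) * a ^ p * v (s - 1)
          + ((9 - 2 * s : ℤ) : k) * v (s - 3) + g s := by
    intro s h1 h2; exact hv s h1 (by rw [h7]; exact h2)
  have h1' : v ((t : ℤ) + 3) = 0 := by rw [← h5]; exact h1
  have h2' : v ((t : ℤ) + 4) = 0 := by rw [← h7]; exact h2
  intro s hs
  rcases (by omega : s ≤ (t : ℤ) + 2 ∨ s = (t : ℤ) + 3 ∨ s = (t : ℤ) + 4 ∨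
      s = (t : ℤ) + 5 ∨ (t : ℤ) + 6 ≤ s) with h | h | h | h | h
  · rw [hw' s, hw' (s - 1), hw' (s - 3), if_pos h, if_pos (by omega), if_pos (by omega)]
    exact hv' s hs (by omega)
  · subst h
    rw [hw', hw', hw', if_neg (by omega), if_pos (by omega), if_pos (by omega)]
    have H := hv' ((t : ℤ) + 3) (by omega) (by omega)
    rw [h1'] at H
    linear_combination H
  · subst h
    rw [hw', hw', hw', if_neg (by omega), if_neg (by omega), if_pos (by omega)]
    have H := hv' ((t : ℤ) + 4) (by omega) (by omega)
    rw [h2', show (t : ℤ) + 4 - 1 = (t : ℤ) + 3 by ring, h1'] at H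
    linear_combination H
  · subst h
    rw [hw', hw', hw', if_neg (by omega), if_neg (by omega), if_pos (by omega)]
    have hc : ((9 - 2 * ((t : ℤ) + 5) : ℤ) : k) = 0 := by
      have : (9 - 2 * ((t : ℤ) + 5) : ℤ) = -(p : ℤ) := by rw [ht]; push_cast; ring
      rw [this]; push_cast [CharP.cast_eq_zero k p]; ring
    rw [hc, hg5 _ (by omega)]
    ring
  · rw [hw', hw', hw', if_neg (by omega), if_neg (by omega), if_neg (by omega),
      hg5 _ (by omega)]
    ring
end

section
/- Let k be a commutative ring, let c, d ∈ k, let n ≥ 5 be an integer, and let α, β : ℕ → k be functions such that for m = n and m = n + 1 one has 2m·d·α_m = −(2m−3)·c·α_{m−1} − (2m−9)·α_{m−3} and 2m·d·β_m = −(2m−3)·c·β_{m−1} − (2m−9)·β_{m−3} (integer coefficients interpreted in k). Define ψ_j := α_j·β_{j+1} − α_{j+1}·β_j. Then (2n+2)·d·ψ_n = (2n−7)·(α_{n−2}·β_n − α_n·β_{n−2}), and (2n+2)·(2n)·d²·ψ_n = −(2n−7)·(2n−3)·c·ψ_{n−2} + (2n−7)·(2n−9)·ψ_{n−3}. -/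
theorem determinant_recurrence_relations
    (k : Type*) [CommRing k] (c d : k) (n : ℕ) (hn : 5 ≤ n)
    (α β : ℕ → k)
    (hα : ∀ m : ℕ, m = n ∨ m = n + 1 →
      ((2 * m : ℕ) : k) * d * α m =
        -(((2 * m - 3 : ℕ) : k) * c * α (m - 1)) - ((2 * m - 9 : ℕ) : k) * α (m - 3))
    (hβ : ∀ m : ℕ, m = n ∨ m = n + 1 →
      ((2 * m : ℕ) : k) * d * β m =
        -(((2 * m - 3 : ℕ) : k) * c * β (m - 1)) - ((2 * m - 9 : ℕ) : k) * β (m - 3))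
    (ψ : ℕ → k) (hψ : ∀ j : ℕ, ψ j = α j * β (j + 1) - α (j + 1) * β j) :
    ((2 * n + 2 : ℕ) : k) * d * ψ n =
      ((2 * n - 7 : ℕ) : k) * (α (n - 2) * β n - α n * β (n - 2)) ∧
    ((2 * n + 2 : ℕ) : k) * ((2 * n : ℕ) : k) * d ^ 2 * ψ n =
      -(((2 * n - 7 : ℕ) : k) * ((2 * n - 3 : ℕ) : k) * c * ψ (n - 2))
        + ((2 * n - 7 : ℕ) : k) * ((2 * n - 9 : ℕ) : k) * ψ (n - 3) := by
  obtain ⟨m, rfl⟩ : ∃ m, n = m + 5 := ⟨n - 5, by omega⟩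
  have h1 := hα (m + 5) (Or.inl rfl)
  have h2 := hα (m + 6) (Or.inr (by omega))
  have h3 := hβ (m + 5) (Or.inl rfl)
  have h4 := hβ (m + 6) (Or.inr (by omega))
  simp only [show 2 * (m + 5) = 2 * m + 10 from by omega,
    show 2 * m + 10 - 3 = 2 * m + 7 from by omega,
    show 2 * m + 10 - 9 = 2 * m + 1 from by omega,
    show m + 5 - 1 = m + 4 from by omega,
    show m + 5 - 3 = m + 2 from by omega,
    show 2 * (m + 6) = 2 * m + 12 from by omega,
    show 2 * m + 12 - 3 = 2 * m + 9 from by omega,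
    show 2 * m + 12 - 9 = 2 * m + 3 from by omega,
    show m + 6 - 1 = m + 5 from by omega,
    show m + 6 - 3 = m + 3 from by omega] at h1 h2 h3 h4
  simp only [show 2 * (m + 5) + 2 = 2 * m + 12 from by omega,
    show 2 * (m + 5) - 7 = 2 * m + 3 from by omega,
    show 2 * (m + 5) - 3 = 2 * m + 7 from by omega,
    show 2 * (m + 5) - 9 = 2 * m + 1 from by omega,
    show m + 5 - 2 = m + 3 from by omega,
    show m + 5 - 3 = m + 2 from by omega]
  push_cast at h1 h2 h3 h4 ⊢
  rw [hψ (m + 5), show m + 5 + 1 = m + 6 from by omega]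
  constructor
  · linear_combination (α (m + 5)) * h4 - (β (m + 5)) * h2
  · rw [hψ (m + 3), hψ (m + 2), show m + 3 + 1 = m + 4 from by omega,
      show m + 2 + 1 = m + 3 from by omega]
    linear_combination ((2 * (m : k) + 10) * d * α (m + 5)) * h4
      - ((2 * (m : k) + 10) * d * β (m + 5)) * h2
      + ((2 * (m : k) + 3) * α (m + 3)) * h3
      - ((2 * (m : k) + 3) * β (m + 3)) * h1
end

section
/- Let p ≥ 11 be a prime. Let K be the fraction field of the polynomial ring ℚ[z₄, z₆], and write A, B ∈ K for the images of z₄, z₆. Define α, β : ℕ → K by: α₀ = β₀ = 0; α₁ = A^p/(2B^p), β₁ = 0; α₂ = −A^{2p}/(8B^{2p}), β₂ = A^p/(4B^p); α₃ = A^{3p}/(16B^{3p}) + 1/(2B^p), β₃ = −A^{2p}/(8B^{2p}); α₄ = −5A^{4p}/(128B^{4p}) − A^p/(4B^{2p}), β₄ = 5A^{3p}/(64B^{3p}) + 3/(8B^p); and for 5 ≤ n ≤ p − 1: α_n = −((2n−3)/(2n))·(A^p/B^p)·α_{n−1} − ((2n−9)/(2n))·(1/B^p)·α_{n−3}, and the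 same recurrence for β. For n ≤ p − 2 set ψ_n := α_n·β_{n+1} − α_{n+1}·β_n. Then for every integer n with 1 ≤ n ≤ (p−3)/2 there exist polynomials Ψ_{2n}, Ψ_{2n−1} ∈ ℚ[z₄, z₆] such that: (i) every coefficient of Ψ_{2n} and of Ψ_{2n−1} is a rational number of nonnegative p-adic valuation; (ii) Ψ_{2n} is weighted homogeneous of degree 4n, and Ψ_{2n−1} is weighted homogeneous of degree 4n + 4, with respect to the weights z₄ ↦ 4, z₆ ↦ 6; (iii) in K one has B^{2np}·ψ_{2n} = Ψ_{2n}(A^p, B^p) and B^{2np}·ψ_{2n−1} = Ψ_{2n−1}(A^p, B^p). -/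
/-!
Clearing denominators, `α` and `β` both satisfy
`2n y a_n = -(2n - 3) x a_{n-1} - (2n - 9) a_{n-3}` with `x = A ^ p`, `y = B ^ p`, so their
Casoratian `ψ` satisfies the three-term recurrence
`4 (k + 4) (k + 3) y² ψ_{k+3} = (2k - 1) ((2k - 3) ψ_k - (2k + 3) x ψ_{k+1})`.
Its leading coefficients are prime to `p` as long as `k + 4 < p`, so starting from the explicit
values of `ψ_1, …, ψ_4`, induction shows that `y ^ (2n) ψ_{2n}` and `y ^ (2n) ψ_{2n-1}` are
polynomials in `x, y` with `p`-integral coefficients, weighted homogeneous for the weights `(4, 6)`.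
-/

open MvPolynomial

theorem padicValRat_nonneg_of_mem_integer {p : ℕ} [Fact p.Prime] {q : ℚ}
    (hq : q ∈ (Rat.padicValuation p).integer) : 0 ≤ padicValRat p q := by
  rw [Valuation.mem_integer_iff] at hq
  by_cases h0 : q = 0
  · simp [h0]
  · simpa [Rat.padicValuation, h0, ← WithZero.exp_neg, ← WithZero.exp_zero] using hq

theorem inv_natCast_mem_integer {p : ℕ} [Fact p.Prime] {n : ℕ} (hn : p.Coprime n) :
    (n : ℚ)⁻¹ ∈ (Rat.padicValuation p).integer := by
  have hunit : Rat.padicValuation p n = 1 := by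
    rw [← Int.cast_natCast, Rat.padicValuation_cast, Int.padicValuation_eq_one_iff,
      Int.natCast_dvd_natCast]
    exact (Nat.Prime.coprime_iff_not_dvd Fact.out).1 hn
  rw [Valuation.mem_integer_iff, map_inv₀, hunit, inv_one]

theorem MvPolynomial.coeff_mem_of_mem_range_map {σ R : Type*} [CommRing R] {S : Subring R}
    {P : MvPolynomial σ R} (hP : P ∈ (map S.subtype).range) (m : σ →₀ ℕ) :
    P.coeff m ∈ S := by
  obtain ⟨Q, rfl⟩ := hP
  rw [coeff_map]
  exact (Q.coeff m).2

section IntegralFormValue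

variable (p : ℕ) [Fact p.Prime] {σ K : Type*} [CommRing K] [Algebra ℚ K]
  (w : σ → ℕ) (v : σ → K)

def IsIntegralFormValue (d : ℕ) (t : K) : Prop :=
  ∃ P ∈ (map (Rat.padicValuation p).integer.subtype : MvPolynomial σ _ →+* _).range,
    P.IsWeightedHomogeneous w d ∧ aeval v P = t

variable {p w v}

theorem isIntegralFormValue_algebraMap {c : ℚ} (hc : c ∈ (Rat.padicValuation p).integer) :
    IsIntegralFormValue p w v 0 (algebraMap ℚ K c) :=
  ⟨C c, ⟨C ⟨c, hc⟩, map_C _ _⟩, isWeightedHomogeneous_C w c, aeval_C v c⟩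

theorem isIntegralFormValue_intCast (m : ℤ) : IsIntegralFormValue p w v 0 (m : K) := by
  simpa using isIntegralFormValue_algebraMap (w := w) (v := v)
    (intCast_mem (Rat.padicValuation p).integer m)

theorem isIntegralFormValue_X (i : σ) : IsIntegralFormValue p w v (w i) (v i) :=
  ⟨X i, ⟨X i, map_X _ _⟩, isWeightedHomogeneous_X ℚ w i, aeval_X v i⟩

namespace IsIntegralFormValue

variable {d e : ℕ} {s t : K}

theorem add (hs : IsIntegralFormValue p w v d s) (ht : IsIntegralFormValue p w v d t) :
    IsIntegralFormValue p w v d (s + t) := by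
  obtain ⟨P, hP, hPd, rfl⟩ := hs
  obtain ⟨Q, hQ, hQd, rfl⟩ := ht
  exact ⟨P + Q, add_mem hP hQ, hPd.add hQd, map_add _ _ _⟩

theorem neg (ht : IsIntegralFormValue p w v d t) : IsIntegralFormValue p w v d (-t) := by
  obtain ⟨P, hP, hPd, rfl⟩ := ht
  exact ⟨-P, neg_mem hP, hPd.neg, map_neg _ _⟩

theorem sub (hs : IsIntegralFormValue p w v d s) (ht : IsIntegralFormValue p w v d t) :
    IsIntegralFormValue p w v d (s - t) :=
  sub_eq_add_neg s t ▸ hs.add ht.neg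

theorem mul (hs : IsIntegralFormValue p w v d s) (ht : IsIntegralFormValue p w v e t) :
    IsIntegralFormValue p w v (d + e) (s * t) := by
  obtain ⟨P, hP, hPd, rfl⟩ := hs
  obtain ⟨Q, hQ, hQd, rfl⟩ := ht
  exact ⟨P * Q, mul_mem hP hQ, hPd.mul hQd, map_mul _ _ _⟩

theorem pow (ht : IsIntegralFormValue p w v d t) (n : ℕ) :
    IsIntegralFormValue p w v (n * d) (t ^ n) := by
  obtain ⟨P, hP, hPd, rfl⟩ := ht
  exact ⟨P ^ n, pow_mem hP n, hPd.pow n, map_pow _ _ _⟩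

theorem of_natCast_mul {n : ℕ} (hn : p.Coprime n) (ht : IsIntegralFormValue p w v d (n * t)) :
    IsIntegralFormValue p w v d t := by
  have hn0 : (n : ℚ) ≠ 0 := Nat.cast_ne_zero.2 fun h =>
    (Fact.out : p.Prime).one_lt.ne' (by simpa [h] using hn)
  have := (isIntegralFormValue_algebraMap (w := w) (v := v) (inv_natCast_mem_integer hn)).mul ht
  rwa [zero_add, ← mul_assoc, ← map_natCast (algebraMap ℚ K), ← map_mul,
    inv_mul_cancel₀ hn0, map_one, one_mul] at this

end IsIntegralFormValue

end IntegralFormValue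

section Casoratian

variable {R : Type*} [CommRing R]

def casoratian (a b : ℕ → R) (n : ℕ) : R := a n * b (n + 1) - a (n + 1) * b n

theorem casoratian_recurrence {a b c u v : ℕ → R} {k : ℕ}
    (ha : ∀ n, k + 3 ≤ n → n ≤ k + 4 → c n * a n = u n * a (n - 1) + v n * a (n - 3))
    (hb : ∀ n, k + 3 ≤ n → n ≤ k + 4 → c n * b n = u n * b (n - 1) + v n * b (n - 3)) :
    c (k + 4) * c (k + 3) * casoratian a b (k + 3) =
      v (k + 4) * (v (k + 3) * casoratian a b k - u (k + 3) * casoratian a b (k + 1)) := by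
  have ha₃ := ha (k + 3) le_rfl (by omega)
  have ha₄ := ha (k + 4) (by omega) le_rfl
  have hb₃ := hb (k + 3) le_rfl (by omega)
  have hb₄ := hb (k + 4) (by omega) le_rfl
  simp only [Nat.add_sub_cancel, show k + 3 - 1 = k + 2 by omega,
    show k + 4 - 1 = k + 3 by omega, show k + 4 - 3 = k + 1 by omega] at ha₃ ha₄ hb₃ hb₄
  simp only [casoratian, show k + 1 + 1 = k + 2 from rfl, show k + 3 + 1 = k + 4 from rfl]
  linear_combination (c (k + 3) * a (k + 3)) * hb₄ - (c (k + 3) * b (k + 3)) * ha₄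
    + (v (k + 4) * b (k + 1)) * ha₃ - (v (k + 4) * a (k + 1)) * hb₃

theorem casoratian_add_three_eq {x y : R} {a b : ℕ → R} {k : ℕ} (hk : 2 ≤ k)
    (ha : ∀ n, 5 ≤ n → n ≤ k + 4 →
      2 * n * y * a n = -(2 * n - 3) * x * a (n - 1) + -(2 * n - 9) * a (n - 3))
    (hb : ∀ n, 5 ≤ n → n ≤ k + 4 →
      2 * n * y * b n = -(2 * n - 3) * x * b (n - 1) + -(2 * n - 9) * b (n - 3)) :
    4 * (k + 4) * (k + 3) * (y ^ 2 * casoratian a b (k + 3)) = (2 * k - 1) *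
      ((2 * k - 3) * casoratian a b k - (2 * k + 3) * x * casoratian a b (k + 1)) := by
  have := casoratian_recurrence (c := fun n => 2 * n * y) (u := fun n => -(2 * n - 3) * x)
    (v := fun n => -(2 * n - 9)) (k := k) (fun n h₁ h₂ => ha n (by omega) h₂)
    (fun n h₁ h₂ => hb n (by omega) h₂)
  push_cast at this
  linear_combination this

end Casoratian

section Normalization

variable {p : ℕ} [Fact p.Prime] {K : Type*} [CommRing K] [Algebra ℚ K]

variable (p) in
/-- For `j = 2n` and `j = 2n - 1` this says that `y ^ (2n) ψ_j` is a `p`-integral form of weight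
`4n`, respectively `4n + 4`. -/
def IsIntegralNormalization (x y : K) (ψ : ℕ → K) (j : ℕ) : Prop :=
  IsIntegralFormValue p ![4, 6] ![x, y] (2 * j + 6 * (j % 2)) (y ^ (j + j % 2) * ψ j)

variable {x y : K} {ψ : ℕ → K}

theorem isIntegralNormalization_add_three {k : ℕ} (hD : p.Coprime (2 ^ 2 * (k + 4) * (k + 3)))
    (hrec : 4 * (k + 4) * (k + 3) * (y ^ 2 * ψ (k + 3)) =
      (2 * k - 1) * ((2 * k - 3) * ψ k - (2 * k + 3) * x * ψ (k + 1)))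
    (hk : IsIntegralNormalization p x y ψ k) (hk₁ : IsIntegralNormalization p x y ψ (k + 1)) :
    IsIntegralNormalization p x y ψ (k + 3) := by
  have hx : IsIntegralFormValue p ![4, 6] ![x, y] 4 x := isIntegralFormValue_X 0
  have hy : IsIntegralFormValue p ![4, 6] ![x, y] 6 y := isIntegralFormValue_X 1
  have hψk : IsIntegralFormValue p ![4, 6] ![x, y] (2 * (k + 3) + 6 * ((k + 3) % 2))
      (((2 * k - 1) * (2 * k - 3) : ℤ) *
        (y ^ (2 * ((k + 3) % 2)) * (y ^ (k + k % 2) * ψ k))) := by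
    convert (isIntegralFormValue_intCast _).mul ((hy.pow _).mul hk) using 1
    omega
  have hψk₁ : IsIntegralFormValue p ![4, 6] ![x, y] (2 * (k + 3) + 6 * ((k + 3) % 2))
      (((2 * k - 1) * (2 * k + 3) : ℤ) * (x * (y ^ (k + 1 + (k + 1) % 2) * ψ (k + 1)))) := by
    convert (isIntegralFormValue_intCast _).mul (hx.mul hk₁) using 1
    omega
  refine .of_natCast_mul hD ?_
  convert hψk.sub hψk₁ using 1
  rw [← mul_assoc (y ^ _), ← pow_add,
    show 2 * ((k + 3) % 2) + (k + k % 2) = k + 1 + (k + 1) % 2 by omega,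
    show k + 3 + (k + 3) % 2 = k + 1 + (k + 1) % 2 + 2 by omega, pow_add]
  push_cast
  linear_combination y ^ (k + 1 + (k + 1) % 2) * hrec

theorem isIntegralNormalization_of_recurrence (hp : 7 ≤ p)
    (h₁ : 8 * (y ^ 2 * ψ 1) = x ^ 2) (h₂ : 8 * (y ^ 2 * ψ 2) = -x)
    (h₃ : 32 * (y ^ 4 * ψ 3) = x ^ 3 + 6 * y ^ 2) (h₄ : 640 * (y ^ 4 * ψ 4) = x ^ 2)
    (hrec : ∀ k : ℕ, 2 ≤ k → k + 5 ≤ p →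
      4 * (k + 4) * (k + 3) * (y ^ 2 * ψ (k + 3)) =
        (2 * k - 1) * ((2 * k - 3) * ψ k - (2 * k + 3) * x * ψ (k + 1)))
    (j : ℕ) (hj : 1 ≤ j) (hjp : j + 2 ≤ p) : IsIntegralNormalization p x y ψ j := by
  have hcop : ∀ n, n ≠ 0 → n < p → p.Coprime n := fun n h0 hn =>
    Nat.coprime_of_lt_prime h0 hn Fact.out
  have h2 : p.Coprime 2 := hcop 2 two_ne_zero (by omega)
  have hx : IsIntegralFormValue p ![4, 6] ![x, y] 4 x := isIntegralFormValue_X 0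
  have hy : IsIntegralFormValue p ![4, 6] ![x, y] 6 y := isIntegralFormValue_X 1
  induction j using Nat.strong_induction_on with
  | _ j ih =>
  obtain rfl | rfl | rfl | rfl | ⟨k, rfl, hk⟩ :
      j = 1 ∨ j = 2 ∨ j = 3 ∨ j = 4 ∨ ∃ k, j = k + 3 ∧ 2 ≤ k := by
    rcases Nat.lt_or_ge j 5 with h | h
    · omega
    · exact Or.inr (Or.inr (Or.inr (Or.inr ⟨j - 3, by omega, by omega⟩)))
  · refine .of_natCast_mul (h2.pow_right 3) ?_
    convert hx.mul hx using 1
    push_cast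
    linear_combination h₁
  · refine .of_natCast_mul (h2.pow_right 3) ?_
    convert hx.neg using 1
    push_cast
    linear_combination h₂
  · refine .of_natCast_mul (h2.pow_right 5) ?_
    convert ((hx.mul hx).mul hx).add ((isIntegralFormValue_intCast 6).mul (hy.mul hy)) using 1
    push_cast
    linear_combination h₃
  · refine .of_natCast_mul ((h2.pow_right 7).mul_right (hcop 5 (by norm_num) (by omega))) ?_
    convert hx.mul hx using 1
    push_cast
    linear_combination h₄
  · exact isIntegralNormalization_add_three
      (((h2.pow_right 2).mul_right (hcop _ (by omega) (by omega))).mul_right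
        (hcop _ (by omega) (by omega)))
      (hrec k hk (by omega)) (ih k (by omega) (by omega) (by omega))
      (ih (k + 1) (by omega) (by omega) (by omega))

end Normalization

section RecurrenceCoefficients

variable {K : Type*} [Field K] [CharZero K] {x y : K} {a b : ℕ → K}

theorem mul_eq_of_recurrence (hy : y ≠ 0) {n : ℕ} (hn : 5 ≤ n)
    (h : a n = -((((2 * n - 3 : ℕ) : K) / ((2 * n : ℕ) : K)) * (x / y) * a (n - 1))
      - (((2 * n - 9 : ℕ) : K) / ((2 * n : ℕ) : K)) * (1 / y) * a (n - 3)) :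
    2 * n * y * a n = -(2 * n - 3) * x * a (n - 1) + -(2 * n - 9) * a (n - 3) := by
  rw [Nat.cast_sub (by omega), Nat.cast_sub (by omega)] at h
  have hn0 : (n : K) ≠ 0 := Nat.cast_ne_zero.2 (by omega)
  rw [h]
  push_cast
  field_simp
  ring

theorem casoratian_initial_values (hy : y ≠ 0)
    (ha₁ : a 1 = x / (2 * y)) (hb₁ : b 1 = 0)
    (ha₂ : a 2 = -(x ^ 2 / (8 * y ^ 2))) (hb₂ : b 2 = x / (4 * y))
    (ha₃ : a 3 = x ^ 3 / (16 * y ^ 3) + 1 / (2 * y)) (hb₃ : b 3 = -(x ^ 2 / (8 * y ^ 2)))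
    (ha₄ : a 4 = -(5 * x ^ 4 / (128 * y ^ 4)) - x / (4 * y ^ 2))
    (hb₄ : b 4 = 5 * x ^ 3 / (64 * y ^ 3) + 3 / (8 * y))
    (ha₅ : 10 * y * a 5 = -(7 * x * a 4) - a 2) (hb₅ : 10 * y * b 5 = -(7 * x * b 4) - b 2) :
    8 * (y ^ 2 * casoratian a b 1) = x ^ 2 ∧ 8 * (y ^ 2 * casoratian a b 2) = -x ∧
      32 * (y ^ 4 * casoratian a b 3) = x ^ 3 + 6 * y ^ 2 ∧
      640 * (y ^ 4 * casoratian a b 4) = x ^ 2 := by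
  have ha₅' : a 5 = (-(7 * x * a 4) - a 2) / (10 * y) := by
    field_simp
    linear_combination ha₅
  have hb₅' : b 5 = (-(7 * x * b 4) - b 2) / (10 * y) := by
    field_simp
    linear_combination hb₅
  simp only [casoratian]
  rw [ha₅', hb₅', ha₁, hb₁, ha₂, hb₂, ha₃, hb₃, ha₄, hb₄]
  refine ⟨?_, ?_, ?_, ?_⟩ <;> field_simp <;> ring

end RecurrenceCoefficients

theorem psi_determinants_are_universal_weighted_homogeneous_general
    (p : ℕ) (hp : p.Prime) (hp11 : 11 ≤ p)
    (A B : FractionRing (MvPolynomial (Fin 2) ℚ))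
    (hB : B = algebraMap (MvPolynomial (Fin 2) ℚ)
      (FractionRing (MvPolynomial (Fin 2) ℚ)) (MvPolynomial.X 1))
    (α β : ℕ → FractionRing (MvPolynomial (Fin 2) ℚ))
    (hα1 : α 1 = A ^ p / (2 * B ^ p)) (hβ1 : β 1 = 0)
    (hα2 : α 2 = -(A ^ (2 * p) / (8 * B ^ (2 * p)))) (hβ2 : β 2 = A ^ p / (4 * B ^ p))
    (hα3 : α 3 = A ^ (3 * p) / (16 * B ^ (3 * p)) + 1 / (2 * B ^ p))
    (hβ3 : β 3 = -(A ^ (2 * p) / (8 * B ^ (2 * p))))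
    (hα4 : α 4 = -(5 * A ^ (4 * p) / (128 * B ^ (4 * p))) - A ^ p / (4 * B ^ (2 * p)))
    (hβ4 : β 4 = 5 * A ^ (3 * p) / (64 * B ^ (3 * p)) + 3 / (8 * B ^ p))
    (hαrec : ∀ n : ℕ, 5 ≤ n → n ≤ p - 1 →
      α n = -((((2 * n - 3 : ℕ) : FractionRing (MvPolynomial (Fin 2) ℚ))
                / ((2 * n : ℕ) : FractionRing (MvPolynomial (Fin 2) ℚ)))
              * (A ^ p / B ^ p) * α (n - 1))
        - (((2 * n - 9 : ℕ) : FractionRing (MvPolynomial (Fin 2) ℚ))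
              / ((2 * n : ℕ) : FractionRing (MvPolynomial (Fin 2) ℚ)))
            * (1 / B ^ p) * α (n - 3))
    (hβrec : ∀ n : ℕ, 5 ≤ n → n ≤ p - 1 →
      β n = -((((2 * n - 3 : ℕ) : FractionRing (MvPolynomial (Fin 2) ℚ))
                / ((2 * n : ℕ) : FractionRing (MvPolynomial (Fin 2) ℚ)))
              * (A ^ p / B ^ p) * β (n - 1))
        - (((2 * n - 9 : ℕ) : FractionRing (MvPolynomial (Fin 2) ℚ))
              / ((2 * n : ℕ) : FractionRing (MvPolynomial (Fin 2) ℚ)))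
            * (1 / B ^ p) * β (n - 3))
    (ψ : ℕ → FractionRing (MvPolynomial (Fin 2) ℚ))
    (hψ : ∀ j : ℕ, ψ j = α j * β (j + 1) - α (j + 1) * β j) :
    ∀ n : ℕ, 1 ≤ n → n ≤ (p - 3) / 2 →
      ∃ Ψe Ψo : MvPolynomial (Fin 2) ℚ,
        (∀ m : Fin 2 →₀ ℕ, 0 ≤ padicValRat p (MvPolynomial.coeff m Ψe)) ∧
        (∀ m : Fin 2 →₀ ℕ, 0 ≤ padicValRat p (MvPolynomial.coeff m Ψo)) ∧
        Ψe.IsWeightedHomogeneous (![4, 6] : Fin 2 → ℕ) (4 * n) ∧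
        Ψo.IsWeightedHomogeneous (![4, 6] : Fin 2 → ℕ) (4 * n + 4) ∧
        B ^ (2 * n * p) * ψ (2 * n) = MvPolynomial.aeval ![A ^ p, B ^ p] Ψe ∧
        B ^ (2 * n * p) * ψ (2 * n - 1) = MvPolynomial.aeval ![A ^ p, B ^ p] Ψo := by
  have : Fact p.Prime := ⟨hp⟩
  have hy : B ^ p ≠ 0 := pow_ne_zero _ <| hB ▸
    (map_ne_zero_iff _ (IsFractionRing.injective _ _)).2 (X_ne_zero 1)
  simp only [pow_mul'] at hα2 hβ3 hα3 hα4 hβ4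
  obtain rfl : ψ = casoratian α β := funext hψ
  have hα n (h5 : 5 ≤ n) (hn : n ≤ p - 1) := mul_eq_of_recurrence hy h5 (hαrec n h5 hn)
  have hβ n (h5 : 5 ≤ n) (hn : n ≤ p - 1) := mul_eq_of_recurrence hy h5 (hβrec n h5 hn)
  obtain ⟨h₁, h₂, h₃, h₄⟩ :=
    casoratian_initial_values hy hα1 hβ1 hα2 hβ2 hα3 hβ3 hα4 hβ4
    (by linear_combination (norm := (norm_num; ring_nf)) hα 5 le_rfl (by omega))
    (by linear_combination (norm := (norm_num; ring_nf)) hβ 5 le_rfl (by omega))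
  intro n hn hnp
  have key := isIntegralNormalization_of_recurrence (p := p) (by omega) h₁ h₂ h₃ h₄
    fun k hk hkp => casoratian_add_three_eq hk (fun m h5 hm => hα m h5 (by omega))
      (fun m h5 hm => hβ m h5 (by omega))
  obtain ⟨Ψe, hΨe, hΨe_hom, hΨe_eval⟩ := key (2 * n) (by omega) (by omega)
  obtain ⟨Ψo, hΨo, hΨo_hom, hΨo_eval⟩ := key (2 * n - 1) (by omega) (by omega)
  refine ⟨Ψe, Ψo,
    fun m => padicValRat_nonneg_of_mem_integer (coeff_mem_of_mem_range_map hΨe m),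
    fun m => padicValRat_nonneg_of_mem_integer (coeff_mem_of_mem_range_map hΨo m),
    by convert hΨe_hom using 1; omega, by convert hΨo_hom using 1; omega, ?_, ?_⟩
  · rw [hΨe_eval, pow_mul', show 2 * n + 2 * n % 2 = 2 * n by omega]
  · rw [hΨo_eval, pow_mul', show 2 * n - 1 + (2 * n - 1) % 2 = 2 * n by omega]

theorem psi_determinants_are_universal_weighted_homogeneous
    (p : ℕ) (hp : p.Prime) (hp11 : 11 ≤ p)
    (A B : FractionRing (MvPolynomial (Fin 2) ℚ))
    (hA : A = algebraMap (MvPolynomial (Fin 2) ℚ)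
      (FractionRing (MvPolynomial (Fin 2) ℚ)) (MvPolynomial.X 0))
    (hB : B = algebraMap (MvPolynomial (Fin 2) ℚ)
      (FractionRing (MvPolynomial (Fin 2) ℚ)) (MvPolynomial.X 1))
    (α β : ℕ → FractionRing (MvPolynomial (Fin 2) ℚ))
    (hα0 : α 0 = 0) (hβ0 : β 0 = 0)
    (hα1 : α 1 = A ^ p / (2 * B ^ p)) (hβ1 : β 1 = 0)
    (hα2 : α 2 = -(A ^ (2 * p) / (8 * B ^ (2 * p)))) (hβ2 : β 2 = A ^ p / (4 * B ^ p))
    (hα3 : α 3 = A ^ (3 * p) / (16 * B ^ (3 * p)) + 1 / (2 * B ^ p))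
    (hβ3 : β 3 = -(A ^ (2 * p) / (8 * B ^ (2 * p))))
    (hα4 : α 4 = -(5 * A ^ (4 * p) / (128 * B ^ (4 * p))) - A ^ p / (4 * B ^ (2 * p)))
    (hβ4 : β 4 = 5 * A ^ (3 * p) / (64 * B ^ (3 * p)) + 3 / (8 * B ^ p))
    (hαrec : ∀ n : ℕ, 5 ≤ n → n ≤ p - 1 →
      α n = -((((2 * n - 3 : ℕ) : FractionRing (MvPolynomial (Fin 2) ℚ))
                / ((2 * n : ℕ) : FractionRing (MvPolynomial (Fin 2) ℚ)))
              * (A ^ p / B ^ p) * α (n - 1))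
        - (((2 * n - 9 : ℕ) : FractionRing (MvPolynomial (Fin 2) ℚ))
              / ((2 * n : ℕ) : FractionRing (MvPolynomial (Fin 2) ℚ)))
            * (1 / B ^ p) * α (n - 3))
    (hβrec : ∀ n : ℕ, 5 ≤ n → n ≤ p - 1 →
      β n = -((((2 * n - 3 : ℕ) : FractionRing (MvPolynomial (Fin 2) ℚ))
                / ((2 * n : ℕ) : FractionRing (MvPolynomial (Fin 2) ℚ)))
              * (A ^ p / B ^ p) * β (n - 1))
        - (((2 * n - 9 : ℕ) : FractionRing (MvPolynomial (Fin 2) ℚ))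
              / ((2 * n : ℕ) : FractionRing (MvPolynomial (Fin 2) ℚ)))
            * (1 / B ^ p) * β (n - 3))
    (ψ : ℕ → FractionRing (MvPolynomial (Fin 2) ℚ))
    (hψ : ∀ j : ℕ, ψ j = α j * β (j + 1) - α (j + 1) * β j) :
    ∀ n : ℕ, 1 ≤ n → n ≤ (p - 3) / 2 →
      ∃ Ψe Ψo : MvPolynomial (Fin 2) ℚ,
        (∀ m : Fin 2 →₀ ℕ, 0 ≤ padicValRat p (MvPolynomial.coeff m Ψe)) ∧
        (∀ m : Fin 2 →₀ ℕ, 0 ≤ padicValRat p (MvPolynomial.coeff m Ψo)) ∧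
        Ψe.IsWeightedHomogeneous (![4, 6] : Fin 2 → ℕ) (4 * n) ∧
        Ψo.IsWeightedHomogeneous (![4, 6] : Fin 2 → ℕ) (4 * n + 4) ∧
        B ^ (2 * n * p) * ψ (2 * n) = MvPolynomial.aeval ![A ^ p, B ^ p] Ψe ∧
        B ^ (2 * n * p) * ψ (2 * n - 1) = MvPolynomial.aeval ![A ^ p, B ^ p] Ψo :=
  psi_determinants_are_universal_weighted_homogeneous_general p hp hp11 A B hB α β hα1 hβ1 hα2 hβ2
    hα3 hβ3 hα4 hβ4 hαrec hβrec ψ hψ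
end

section
/- Let p ≥ 13 be a prime with p ≡ 1 mod 3. Define u : ℕ → ℚ by u₁ = u₂ = 0, u₃ = 3/16, u₄ = u₅ = 0, and u_n = ((2n−7)·(2n−9))/((2n+2)·(2n)) · u_{n−3} for all n ≥ 6. Then the p-adic valuation of u_{(p+5)/2} is 0; in particular u_{(p+5)/2} ≠ 0. -/
/-!
Along the recurrence only the terms `u (3 * k)` survive, and each is `3 / 16` times a product of
ratios `(2n - 7)(2n - 9) / ((2n + 2) 2n)` with `6 ≤ n ≤ (p + 5) / 2` and `3 ∣ n`. Every integer
occurring there is positive, smaller than `2p`, and `≢ 1 (mod 6)`; since `p ≡ 1 (mod 6)`, none of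
them is divisible by `p`. Hence all these numbers, and so `u ((p + 5) / 2)`, are `p`-adic units.
-/

def psiRecRatio (n : ℕ) : ℚ :=
  (((2 * n - 7 : ℕ) : ℚ) * ((2 * n - 9 : ℕ) : ℚ)) / (((2 * n + 2 : ℕ) : ℚ) * ((2 * n : ℕ) : ℚ))

section PadicNorm

variable {p : ℕ} [Fact p.Prime]

theorem padicNorm_natCast_eq_one_of_lt_two_mul {m : ℕ} (hm : m ≠ 0) (hlt : m < 2 * p)
    (hne : m ≠ p) : padicNorm p m = 1 :=
  (padicNorm.nat_eq_one_iff m).2 fun hdvd => hne (Nat.eq_of_dvd_of_lt_two_mul hm hdvd hlt)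

theorem padicValRat_eq_zero_of_padicNorm_eq_one {q : ℚ} (h : padicNorm p q = 1) :
    padicValRat p q = 0 := by
  have hq : q ≠ 0 := by rintro rfl; simp at h
  have hp1 : (p : ℚ) ≠ 1 := by exact_mod_cast (Fact.out : p.Prime).one_lt.ne'
  rw [padicNorm.eq_zpow_of_nonzero hq, zpow_eq_one_iff_right₀ (Nat.cast_nonneg p) hp1] at h
  exact neg_eq_zero.mp h

theorem padicNorm_psiRecRatio_eq_one (hp6 : p % 6 = 1) (hp7 : 7 < p) {n : ℕ} (hn : 3 ∣ n)
    (hn6 : 6 ≤ n) (hnp : 2 * n ≤ p + 5) : padicNorm p (psiRecRatio n) = 1 := by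
  have unit : ∀ m : ℕ, m ≠ 0 → m < 2 * p → m % 6 ≠ 1 → padicNorm p m = 1 :=
    fun m hm hlt h6 => padicNorm_natCast_eq_one_of_lt_two_mul hm hlt (by rintro rfl; exact h6 hp6)
  obtain ⟨k, rfl⟩ := hn
  simp only [psiRecRatio, padicNorm.mul, padicNorm.div]
  rw [unit _ (by omega) (by omega) (by omega), unit _ (by omega) (by omega) (by omega),
    unit _ (by omega) (by omega) (by omega), unit _ (by omega) (by omega) (by omega)]
  norm_num

theorem padicNorm_eq_one_of_step_three {N : ℕ} {u r : ℕ → ℚ}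
    (hrec : ∀ n, 6 ≤ n → u n = r n * u (n - 3))
    (hr : ∀ n, 6 ≤ n → n ≤ N → 3 ∣ n → padicNorm p (r n) = 1) (h3 : padicNorm p (u 3) = 1) :
    ∀ k, 3 * (k + 1) ≤ N → padicNorm p (u (3 * (k + 1))) = 1 := by
  intro k
  induction k with
  | zero => exact fun _ => by simpa using h3
  | succ k ih =>
    intro hk
    rw [hrec _ (by omega), padicNorm.mul, hr _ (by omega) hk (dvd_mul_right 3 _),
      show 3 * (k + 1 + 1) - 3 = 3 * (k + 1) by omega, ih (by omega), one_mul]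

end PadicNorm

theorem psi_at_j_zero_nonzero_mod_p_general
    (p : ℕ) (hp : p.Prime) (hp13 : 13 ≤ p) (hp3 : p % 3 = 1)
    (u : ℕ → ℚ)
    (h3 : u 3 = 3 / 16)
    (hrec : ∀ n : ℕ, 6 ≤ n →
      u n = (((2 * n - 7 : ℕ) : ℚ) * ((2 * n - 9 : ℕ) : ℚ))
        / (((2 * n + 2 : ℕ) : ℚ) * ((2 * n : ℕ) : ℚ)) * u (n - 3)) :
    padicValRat p (u ((p + 5) / 2)) = 0 ∧ u ((p + 5) / 2) ≠ 0 := by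
  have : Fact p.Prime := ⟨hp⟩
  have hp6 : p % 6 = 1 := by
    have := Nat.odd_iff.mp (hp.odd_of_ne_two (by omega))
    omega
  have hu3 : padicNorm p (u 3) = 1 := by
    rw [h3, show (3 / 16 : ℚ) = ((3 : ℕ) : ℚ) / ((16 : ℕ) : ℚ) by norm_num, padicNorm.div,
      padicNorm_natCast_eq_one_of_lt_two_mul (by norm_num) (by omega) (by omega),
      padicNorm_natCast_eq_one_of_lt_two_mul (by norm_num) (by omega) (by omega), div_one]
  have hN : (p + 5) / 2 = 3 * ((p + 5) / 6 - 1 + 1) := by omega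
  have hunit : padicNorm p (u ((p + 5) / 2)) = 1 := by
    rw [hN]
    exact padicNorm_eq_one_of_step_three (N := (p + 5) / 2) (r := psiRecRatio) hrec
      (fun n hn6 hnN hn => padicNorm_psiRecRatio_eq_one hp6 (by omega) hn hn6 (by omega)) hu3
      _ (by omega)
  exact ⟨padicValRat_eq_zero_of_padicNorm_eq_one hunit, by rintro h; simp [h] at hunit⟩

theorem psi_at_j_zero_nonzero_mod_p
    (p : ℕ) (hp : p.Prime) (hp13 : 13 ≤ p) (hp3 : p % 3 = 1)
    (u : ℕ → ℚ)
    (h1 : u 1 = 0) (h2 : u 2 = 0) (h3 : u 3 = 3 / 16) (h4 : u 4 = 0) (h5 : u 5 = 0)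
    (hrec : ∀ n : ℕ, 6 ≤ n →
      u n = (((2 * n - 7 : ℕ) : ℚ) * ((2 * n - 9 : ℕ) : ℚ))
        / (((2 * n + 2 : ℕ) : ℚ) * ((2 * n : ℕ) : ℚ)) * u (n - 3)) :
    padicValRat p (u ((p + 5) / 2)) = 0 ∧ u ((p + 5) / 2) ≠ 0 :=
  psi_at_j_zero_nonzero_mod_p_general p hp hp13 hp3 u h3 hrec
end

section
/- Let p ≥ 13 be a prime with p ≡ 1 mod 4, and write p = 4N + 1. Define t : ℕ → ℚ by t₂ = 1/32 and t_n = −((4n−9)·(4n−5))/((4n)·(4n−2)) · t_{n−1} for all n ≥ 3. Then the p-adic valuation of t_{N+2} is 0; in particular t_{N+2} ≠ 0. -/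
/-!
Each step of the recurrence multiplies `t` by `-(4n-9)(4n-5) / ((4n)(4n-2))`. For
`3 ≤ n ≤ N + 2` all four factors are positive and below `2p` (at most `p + 7`, so `p > 7` is
needed: for `p = 5` the factor `4·3 - 2 = 10` is divisible by `p`), and none of them is `1 mod 4`
(the first two are `3 mod 4`, the last two even), so none equals `p = 4N + 1`, hence none is
divisible by `p`. Each step is therefore multiplication by a `p`-adic unit, and so is `t₂ = 1/32`.
-/

theorem padicNorm_eq_one_iff {p : ℕ} [Fact p.Prime] {q : ℚ} :
    padicNorm p q = 1 ↔ q ≠ 0 ∧ padicValRat p q = 0 := by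
  by_cases hq : q = 0
  · simp [hq]
  · rw [padicNorm.eq_zpow_of_nonzero hq, zpow_eq_one_iff_right₀ (Nat.cast_nonneg p)
      (by exact_mod_cast (Fact.out : p.Prime).ne_one), neg_eq_zero]
    simp [hq]

theorem padicNorm_natCast_eq_one_of_lt_two_mul_s14 {p m : ℕ} [Fact p.Prime] (hm₀ : 0 < m)
    (hm : m < 2 * p) (hmp : m ≠ p) : padicNorm p m = 1 :=
  (padicNorm.nat_eq_one_iff m).mpr fun hdvd => hmp (Nat.eq_of_dvd_of_lt_two_mul hm₀.ne' hdvd hm)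

theorem padicNorm_eq_one_of_recurrence {p : ℕ} [Fact p.Prime] {t r : ℕ → ℚ} {a M : ℕ}
    (ha : padicNorm p (t a) = 1) (hrec : ∀ n, a < n → n ≤ M → t n = r n * t (n - 1))
    (hr : ∀ n, a < n → n ≤ M → padicNorm p (r n) = 1) (haM : a ≤ M) :
    padicNorm p (t M) = 1 := by
  suffices ∀ n, a ≤ n → n ≤ M → padicNorm p (t n) = 1 from this M haM le_rfl
  intro n han
  induction n, han using Nat.le_induction with
  | base => exact fun _ => ha
  | succ n han ih =>
    intro hnM
    rw [hrec (n + 1) (by omega) hnM, padicNorm.mul, hr (n + 1) (by omega) hnM,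
      Nat.add_sub_cancel, ih (by omega), one_mul]

def psiRecurrenceRatio (n : ℕ) : ℚ :=
  -((((4 * n - 9 : ℕ) : ℚ) * ((4 * n - 5 : ℕ) : ℚ)) / (((4 * n : ℕ) : ℚ) * ((4 * n - 2 : ℕ) : ℚ)))

theorem padicNorm_psiRecurrenceRatio {p N n : ℕ} [Fact p.Prime] (hpN : p = 4 * N + 1)
    (hp13 : 13 ≤ p) (hn₃ : 3 ≤ n) (hnN : n ≤ N + 2) :
    padicNorm p (psiRecurrenceRatio n) = 1 := by
  have hunit : ∀ m : ℕ, 0 < m → m < 2 * p → m % 4 ≠ 1 → padicNorm p m = 1 :=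
    fun m hm₀ hm hm4 => padicNorm_natCast_eq_one_of_lt_two_mul_s14 hm₀ hm (by omega)
  rw [psiRecurrenceRatio, padicNorm.neg, padicNorm.div, padicNorm.mul, padicNorm.mul,
    hunit (4 * n - 9) (by omega) (by omega) (by omega),
    hunit (4 * n - 5) (by omega) (by omega) (by omega),
    hunit (4 * n) (by omega) (by omega) (by omega),
    hunit (4 * n - 2) (by omega) (by omega) (by omega)]
  norm_num

theorem psi_at_j_1728_nonzero_mod_p
    (p N : ℕ) (hp : p.Prime) (hp13 : 13 ≤ p) (hpN : p = 4 * N + 1)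
    (t : ℕ → ℚ) (h2 : t 2 = 1 / 32)
    (hrec : ∀ n : ℕ, 3 ≤ n →
      t n = -((((4 * n - 9 : ℕ) : ℚ) * ((4 * n - 5 : ℕ) : ℚ))
        / (((4 * n : ℕ) : ℚ) * ((4 * n - 2 : ℕ) : ℚ))) * t (n - 1)) :
    padicValRat p (t (N + 2)) = 0 ∧ t (N + 2) ≠ 0 := by
  have : Fact p.Prime := ⟨hp⟩
  have h32 : ¬p ∣ 2 ^ 5 := fun h => absurd (Nat.le_of_dvd two_pos (hp.dvd_of_dvd_pow h)) (by omega)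
  have ht₂ : padicNorm p (t 2) = 1 := by
    rw [h2, padicNorm.div, padicNorm.one, show (32 : ℚ) = ((2 ^ 5 : ℕ) : ℚ) by norm_num,
      (padicNorm.nat_eq_one_iff _).mpr h32, div_one]
  have htN : padicNorm p (t (N + 2)) = 1 :=
    padicNorm_eq_one_of_recurrence ht₂ (fun n hn _ => hrec n hn)
      (fun n hn hnN => padicNorm_psiRecurrenceRatio hpN hp13 hn hnN) (by omega)
  obtain ⟨hne, hval⟩ := padicNorm_eq_one_iff.mp htN
  exact ⟨hval, hne⟩
end

section
/- Let p ≥ 7 be a prime with p ≡ 1 mod 3, let k be a field of characteristic p, let b ∈ k with b ≠ 0, and let g : ℤ → k satisfy g_s = 0 for all s ∉ {1, 2, 4} and 2·b^p·g₄ = −g₁. Then there exists v : ℤ → k with v_s = 0 for all s < 0, v₀ = 0, and v_s = 0 for all s > (p+3)/2, such that for every integer s ≥ 1 one has 2s·b^p·v_s = (9 − 2s)·v_{s−3} + 2·g_s (integer coefficients interpreted in k). -/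
noncomputable def wAux {k : Type*} [Field k] (b : k) (p : ℕ) (g2 : k) : ℕ → k
  | 0 => g2 / (2 * b ^ p)
  | (j + 1) => ((5 - 6 * ((j : ℤ) + 1) : ℤ) : k) /
      (((6 * ((j : ℤ) + 1) + 4 : ℤ) : k) * b ^ p) * wAux b p g2 j

theorem finitely_supported_solution_j_zero
    (p : ℕ) (hp : p.Prime) (hp7 : 7 ≤ p) (hp3 : p % 3 = 1)
    (k : Type*) [Field k] [CharP k p] (b : k) (hb : b ≠ 0)
    (g : ℤ → k) (hgsupp : ∀ s : ℤ, s ≠ 1 → s ≠ 2 → s ≠ 4 → g s = 0)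
    (hgcomp : 2 * b ^ p * g 4 = -g 1) :
    ∃ v : ℤ → k,
      (∀ s : ℤ, s < 0 → v s = 0) ∧ v 0 = 0 ∧
      (∀ s : ℤ, (((p + 3) / 2 : ℕ) : ℤ) < s → v s = 0) ∧
      ∀ s : ℤ, 1 ≤ s →
        ((2 * s : ℤ) : k) * b ^ p * v s = ((9 - 2 * s : ℤ) : k) * v (s - 3) + 2 * g s := by
  have hpodd : p % 2 = 1 := Nat.odd_iff.mp (hp.odd_of_ne_two (by omega))
  set m : ℕ := (p - 1) / 6 with hm
  have hpm : p = 6 * m + 1 := by omega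
  have hm1 : 1 ≤ m := by omega
  have hbp : b ^ p ≠ 0 := pow_ne_zero _ hb
  have hnz : ∀ n : ℤ, 0 < n → n < 2 * p → n ≠ (p : ℤ) → ((n : ℤ) : k) ≠ 0 := by
    intro n h1 h2 h3 h
    rw [CharP.intCast_eq_zero_iff k p] at h
    obtain ⟨c, hc⟩ := h
    have hp0 : (0 : ℤ) < (p : ℤ) := by exact_mod_cast hp.pos
    have hc1 : 0 < c := by
      by_contra h'
      push_neg at h'
      have : (p : ℤ) * c ≤ 0 := mul_nonpos_iff.mpr (Or.inl ⟨hp0.le, h'⟩)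
      omega
    have hc2 : c < 2 := by
      have := (mul_lt_mul_iff_right₀ hp0).mp (by linarith : (p : ℤ) * c < (p : ℤ) * 2)
      exact this
    have : c = 1 := by omega
    rw [this, mul_one] at hc
    exact h3 (by omega)
  have h2k : (2 : k) ≠ 0 := by
    have := hnz 2 (by omega) (by omega) (by omega)
    exact_mod_cast this
  set v : ℤ → k := fun s =>
    if s = 1 then -2 * g 4
    else if s % 3 = 2 ∧ 2 ≤ s ∧ s ≤ 3 * (m : ℤ) + 2 then wAux b p (g 2) ((s - 2) / 3).toNat
    else 0 with hvdef
  have hv0 : ∀ s : ℤ, s ≠ 1 → (s % 3 ≠ 2 ∨ s < 2 ∨ 3 * (m : ℤ) + 2 < s) → v s = 0 := by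
    intro s h1 h2
    simp only [hvdef]
    rw [if_neg h1, if_neg (by omega)]
  have hv1 : v 1 = -2 * g 4 := by simp only [hvdef]; norm_num
  have hv2 : ∀ q : ℕ, (q : ℤ) ≤ (m : ℤ) → v (3 * (q : ℤ) + 2) = wAux b p (g 2) q := by
    intro q hq
    simp only [hvdef]
    rw [if_neg (by omega), if_pos (by omega)]
    congr 1
    omega
  refine ⟨v, ?_, ?_, ?_, ?_⟩
  · intro s hs; exact hv0 s (by omega) (by omega)
  · exact hv0 0 (by omega) (by omega)
  · intro s hs
    have hh : (((p + 3) / 2 : ℕ) : ℤ) = 3 * (m : ℤ) + 2 := by omega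
    exact hv0 s (by omega) (by omega)
  · intro s hs
    have hcase : s % 3 = 0 ∨ s = 1 ∨ s = 4 ∨ (s % 3 = 1 ∧ 7 ≤ s) ∨ s = 2 ∨
        (s % 3 = 2 ∧ 5 ≤ s ∧ s ≤ 3 * (m : ℤ) + 2) ∨ s = 3 * (m : ℤ) + 5 ∨
        (s % 3 = 2 ∧ 3 * (m : ℤ) + 8 ≤ s) := by omega
    rcases hcase with h | h | h | h | h | h | h | h
    · -- s ≡ 0 mod 3
      rw [hv0 s (by omega) (by omega), hv0 (s - 3) (by omega) (by omega),
        hgsupp s (by omega) (by omega) (by omega)]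
      ring
    · -- s = 1
      subst h
      rw [hv1, hv0 (1 - 3) (by omega) (by omega)]
      push_cast
      linear_combination (-2 : k) * hgcomp
    · -- s = 4
      subst h
      have h43 : (4 : ℤ) - 3 = 1 := by norm_num
      rw [hv0 4 (by omega) (by omega), h43, hv1]
      push_cast
      ring
    · -- s ≡ 1 mod 3, s ≥ 7
      rw [hv0 s (by omega) (by omega), hv0 (s - 3) (by omega) (by omega),
        hgsupp s (by omega) (by omega) (by omega)]
      ring
    · -- s = 2
      subst h
      have h20 : v 2 = wAux b p (g 2) 0 := by
        have := hv2 0 (by omega)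
        simpa using this
      rw [h20, hv0 (2 - 3) (by omega) (by omega)]
      rw [show wAux b p (g 2) 0 = g 2 / (2 * b ^ p) from rfl]
      push_cast
      field_simp
      ring
    · -- 5 ≤ s ≤ 3m+2, s ≡ 2 mod 3
      obtain ⟨hmod, h5, hub⟩ := h
      obtain ⟨q, hq, hqm⟩ : ∃ q : ℕ, s = 3 * ((q : ℤ) + 1) + 2 ∧ (q : ℤ) + 1 ≤ (m : ℤ) :=
        ⟨((s - 5) / 3).toNat, by omega, by omega⟩
      have hvs : v s = wAux b p (g 2) (q + 1) := by
        have := hv2 (q + 1) (by exact_mod_cast hqm)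
        push_cast at this; rw [hq]; exact this
      have hvs3 : v (s - 3) = wAux b p (g 2) q := by
        have := hv2 q (by omega)
        rw [show s - 3 = 3 * (q : ℤ) + 2 from by omega]; exact this
      have hB : (((6 * ((q : ℤ) + 1) + 4 : ℤ)) : k) ≠ 0 := hnz _ (by omega) (by omega) (by omega)
      rw [hvs, hvs3, hgsupp s (by omega) (by omega) (by omega),
        show wAux b p (g 2) (q + 1) = ((5 - 6 * ((q : ℤ) + 1) : ℤ) : k) /
          (((6 * ((q : ℤ) + 1) + 4 : ℤ) : k) * b ^ p) * wAux b p (g 2) q from rfl,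
        show ((2 * s : ℤ) : k) = (((6 * ((q : ℤ) + 1) + 4 : ℤ)) : k) from by rw [hq]; push_cast; ring,
        show ((9 - 2 * s : ℤ) : k) = (((5 - 6 * ((q : ℤ) + 1) : ℤ)) : k) from by
          rw [hq]; push_cast; ring]
      have key : ((5 - 6 * ((q : ℤ) + 1) : ℤ) : k) /
          ((((6 * ((q : ℤ) + 1) + 4 : ℤ)) : k) * b ^ p) *
          ((((6 * ((q : ℤ) + 1) + 4 : ℤ)) : k) * b ^ p)
          = ((5 - 6 * ((q : ℤ) + 1) : ℤ) : k) :=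
        div_mul_cancel₀ _ (mul_ne_zero hB hbp)
      linear_combination wAux b p (g 2) q * key
    · -- s = 3m+5
      have hvs : v s = 0 := hv0 s (by omega) (by omega)
      have hvs3 : v (s - 3) = wAux b p (g 2) m := by
        have := hv2 m le_rfl
        rw [show s - 3 = 3 * (m : ℤ) + 2 from by omega]; exact this
      have hcoef : ((9 - 2 * s : ℤ) : k) = 0 := by
        rw [show (9 - 2 * s : ℤ) = -(p : ℤ) from by omega]
        push_cast [CharP.cast_eq_zero k p]
        ring
      rw [hvs, hvs3, hcoef, hgsupp s (by omega) (by omega) (by omega)]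
      ring
    · -- s ≡ 2 mod 3, s ≥ 3m+8
      rw [hv0 s (by omega) (by omega), hv0 (s - 3) (by omega) (by omega),
        hgsupp s (by omega) (by omega) (by omega)]
      ring
end

section
/- Let p be a prime with p ≡ 1 mod 4, let k be a field of characteristic p, let a ∈ k with a ≠ 0, and let g : ℤ → k satisfy g_s = 0 for all s ∉ {1, 2, 4} and a^p·g₄ = −g₂. Then there exists v : ℤ → k with v_s = 0 for all s < 0 and v_s = 0 for all s > (p+7)/2, such that for every integer s ≥ 1 one has (2s − 3)·a^p·v_{s−1} = (9 − 2s)·v_{s−3} + 2·g_s (integer coefficients interpreted in k). -/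
/-!
The system decouples by parity: odd `s` only involves the even-indexed values of `v`, and even
`s` only the odd-indexed ones. On the odd indices `v₁ = -2 g₄` and zero elsewhere is a solution
exactly because of the compatibility condition `a^p g₄ = -g₂`. On the even indices the equations
form a first-order recurrence `(4m - 1) a^p v_{2m} = (7 - 4m) v_{2m-2}` started at
`v₀ = -2 g₁ / a^p`; its leading coefficient is a unit for `m ≤ (p + 3) / 4`, and at the next index
the coefficient `7 - 4m = -p` vanishes, so the chain may be cut off there.
-/

theorem exists_solution_of_first_order_recurrence {K : Type*} [Field K] (α β : ℤ → K) (c : K)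
    {N : ℤ} (hN : 0 ≤ N) (hα : ∀ m, 0 < m → m ≤ N → α m ≠ 0) (hβ : β (N + 1) = 0) :
    ∃ w : ℤ → K, w 0 = c ∧ (∀ m, m < 0 ∨ N < m → w m = 0) ∧
      ∀ m, 0 < m → α m * w m = β m * w (m - 1) := by
  refine ⟨fun m => if 0 ≤ m ∧ m ≤ N then c * ∏ j ∈ Finset.Ioc 0 m, β j / α j else 0,
    by simp [hN], fun m hm => if_neg (by omega : ¬ (0 ≤ m ∧ m ≤ N)), fun m hm => ?_⟩
  by_cases hmN : m ≤ N
  · have hm_notMem : m ∉ Finset.Ioc 0 (m - 1) := by simp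
    simp only [if_pos (And.intro hm.le hmN), if_pos (show 0 ≤ m - 1 ∧ m - 1 ≤ N by omega),
      ← Finset.insert_Ioc_sub_one_right_eq_Ioc hm, Finset.prod_insert hm_notMem]
    field_simp [hα m hm hmN]
  · have hβm : β m = 0 ∨ N < m - 1 := by
      obtain rfl | h : m = N + 1 ∨ N + 1 < m := by omega
      exacts [Or.inl hβ, Or.inr (by omega)]
    rcases hβm with h | h
    · simp [hmN, h]
    · simp [hmN, show ¬ m - 1 ≤ N by omega]

theorem intCast_four_mul_sub_one_ne_zero {K : Type*} [AddGroupWithOne K] {p : ℕ} [CharP K p]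
    (hp : 1 < p) (hp4 : p % 4 = 1) {m : ℤ} (hm : 0 < m) (hmp : 4 * m ≤ p + 3) :
    ((4 * m - 1 : ℤ) : K) ≠ 0 := by
  rw [Ne, CharP.intCast_eq_zero_iff K p]
  intro hdvd
  have := Nat.eq_of_dvd_of_lt_two_mul (by omega) (Int.natCast_dvd.mp hdvd) (by omega)
  omega

def interleave {K : Type*} (e o : ℤ → K) (s : ℤ) : K :=
  if Even s then e (s / 2) else o (s / 2)

section interleave

variable {K : Type*} (e o : ℤ → K)

@[simp]
theorem interleave_two_mul (m : ℤ) : interleave e o (2 * m) = e m := by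
  simp [interleave]

@[simp]
theorem interleave_two_mul_add_one (m : ℤ) : interleave e o (2 * m + 1) = o m := by
  simp [interleave, show (2 * m + 1) / 2 = m by omega]

theorem interleave_eq_zero [Zero K] {s : ℤ} (he : e (s / 2) = 0) (ho : o (s / 2) = 0) :
    interleave e o s = 0 := by
  unfold interleave; split_ifs <;> assumption

end interleave

theorem interleave_solves {K : Type*} [Field K] (A : K) (g e o : ℤ → K)
    (he : ∀ m, 0 ≤ m →
      ((4 * m - 1 : ℤ) : K) * A * e m = ((7 - 4 * m : ℤ) : K) * e (m - 1) + 2 * g (2 * m + 1))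
    (ho : ∀ m, 0 ≤ m →
      ((4 * m + 1 : ℤ) : K) * A * o m = ((5 - 4 * m : ℤ) : K) * o (m - 1) + 2 * g (2 * m + 2))
    (s : ℤ) (hs : 1 ≤ s) :
    ((2 * s - 3 : ℤ) : K) * A * interleave e o (s - 1) =
      ((9 - 2 * s : ℤ) : K) * interleave e o (s - 3) + 2 * g s := by
  obtain ⟨m, rfl | rfl⟩ := Int.even_or_odd' s
  · have h := ho (m - 1) (by omega)
    rw [show 2 * m - 1 = 2 * (m - 1) + 1 by ring, show 2 * m - 3 = 2 * (m - 1 - 1) + 1 by ring,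
      interleave_two_mul_add_one, interleave_two_mul_add_one]
    rw [show 2 * (m - 1) + 2 = 2 * m by ring] at h
    push_cast at h ⊢
    linear_combination h
  · have h := he m (by omega)
    rw [show 2 * m + 1 - 1 = 2 * m by ring, show 2 * m + 1 - 3 = 2 * (m - 1) by ring,
      interleave_two_mul, interleave_two_mul]
    push_cast at h ⊢
    linear_combination h

theorem single_solves_odd_chain {K : Type*} [Field K] (A : K) (g : ℤ → K)
    (hg : ∀ m, 2 ≤ m → g (2 * m + 2) = 0) (hcomp : A * g 4 = -g 2) (m : ℤ) (hm : 0 ≤ m) :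
    ((4 * m + 1 : ℤ) : K) * A * (Pi.single 0 (-2 * g 4) : ℤ → K) m =
      ((5 - 4 * m : ℤ) : K) * (Pi.single 0 (-2 * g 4) : ℤ → K) (m - 1) + 2 * g (2 * m + 2) := by
  obtain rfl | rfl | hm2 : m = 0 ∨ m = 1 ∨ 2 ≤ m := by omega
  · rw [zero_sub, Pi.single_eq_same, Pi.single_eq_of_ne (by norm_num)]
    push_cast
    linear_combination (-2 : K) * hcomp
  · simp
  · simp [hg m hm2, show m ≠ 0 by omega, show m - 1 ≠ 0 by omega]

theorem exists_even_chain {K : Type*} [Field K] {p : ℕ} [CharP K p] (hp : 1 < p)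
    (hp4 : p % 4 = 1) {A : K} (hA : A ≠ 0) (g : ℤ → K) (hg : ∀ m, 0 < m → g (2 * m + 1) = 0) :
    ∃ e : ℤ → K, (∀ m, m < 0 ∨ ((p : ℤ) + 3) / 4 < m → e m = 0) ∧ ∀ m, 0 ≤ m →
      ((4 * m - 1 : ℤ) : K) * A * e m = ((7 - 4 * m : ℤ) : K) * e (m - 1) + 2 * g (2 * m + 1) := by
  have hβ : ((7 - 4 * (((p : ℤ) + 3) / 4 + 1) : ℤ) : K) = 0 := by
    rw [show 7 - 4 * (((p : ℤ) + 3) / 4 + 1) = -(p : ℤ) by omega]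
    simp
  obtain ⟨e, he0, hsupp, hrec⟩ := exists_solution_of_first_order_recurrence
    (fun m => ((4 * m - 1 : ℤ) : K) * A) (fun m => ((7 - 4 * m : ℤ) : K)) (-2 * g 1 / A)
    (by omega) (fun m hm hmN => mul_ne_zero (intCast_four_mul_sub_one_ne_zero hp hp4 hm (by omega)) hA) hβ
  refine ⟨e, hsupp, fun m hm => ?_⟩
  obtain rfl | hm := hm.eq_or_lt
  · rw [he0, zero_sub, hsupp (-1) (Or.inl (by norm_num))]
    field_simp
    push_cast
    ring
  · rw [hg m hm, mul_zero, add_zero]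
    exact hrec m hm

theorem finitely_supported_solution_j_1728
    (p : ℕ) (hp : p.Prime) (hp4 : p % 4 = 1)
    (k : Type*) [Field k] [CharP k p] (a : k) (ha : a ≠ 0)
    (g : ℤ → k) (hgsupp : ∀ s : ℤ, s ≠ 1 → s ≠ 2 → s ≠ 4 → g s = 0)
    (hgcomp : a ^ p * g 4 = -g 2) :
    ∃ v : ℤ → k,
      (∀ s : ℤ, s < 0 → v s = 0) ∧
      (∀ s : ℤ, (((p + 7) / 2 : ℕ) : ℤ) < s → v s = 0) ∧
      ∀ s : ℤ, 1 ≤ s →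
        ((2 * s - 3 : ℤ) : k) * a ^ p * v (s - 1) =
          ((9 - 2 * s : ℤ) : k) * v (s - 3) + 2 * g s := by
  obtain ⟨e, he_supp, he⟩ := exists_even_chain hp.one_lt hp4 (pow_ne_zero p ha) g
    (fun m hm => hgsupp _ (by omega) (by omega) (by omega))
  let o : ℤ → k := Pi.single 0 (-2 * g 4)
  have ho_supp : ∀ m, m ≠ 0 → o m = 0 := fun m hm => Pi.single_eq_of_ne hm _
  refine ⟨interleave e o, fun s hs => ?_, fun s hs => ?_,
    interleave_solves _ g e o he (single_solves_odd_chain _ g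
      (fun m hm => hgsupp _ (by omega) (by omega) (by omega)) hgcomp)⟩
  · exact interleave_eq_zero e o (he_supp _ (Or.inl (by omega))) (ho_supp _ (by omega))
  · exact interleave_eq_zero e o (he_supp _ (Or.inr (by omega))) (ho_supp _ (by omega))
end

section
/- Work in the polynomial ring (ZMod 13)[z₄, z₆]. Let c₁, c₂, c₃ ∈ ZMod 13 be the reductions mod 13 of the rational numbers −847/983040, −2937/573440, and 33/7168 respectively (each of these rationals has 13-adic valuation 0, so the reductions are well defined as numerator times the inverse of the denominator). Let H₁₃ ∈ (ZMod 13)[z₄, z₆] be the coefficient of X^{12} in (X³ + z₄·X + z₆)⁶. Then c₁·z₄⁶ + c₂·z₄³·z₆² + c₃·z₆⁴ = 2·(4·z₄³ + 27·z₆²)·H₁₃. -/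
open Polynomial

set_option maxHeartbeats 1000000 in
lemma coeff12_aux {R : Type*} [CommRing R] (a b : R) :
    ((X^3 + C a * X + C b)^6 : R[X]).coeff 12 = 20*a^3 + 15*b^2 := by
  have h : ((X^3 + C a * X + C b)^6 : R[X]) =
      C (a^6) * X^6 + 6 * C (a^5*b) * X^5 + 6 * C (a^5) * X^8 + 15 * C (a^4*b^2) * X^4
      + 30 * C (a^4*b) * X^7 + 15 * C (a^4) * X^10 + 20 * C (a^3*b^3) * X^3
      + 60 * C (a^3*b^2) * X^6 + 60 * C (a^3*b) * X^9 + 20 * C (a^3) * X^12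
      + 15 * C (a^2*b^4) * X^2 + 60 * C (a^2*b^3) * X^5 + 90 * C (a^2*b^2) * X^8
      + 60 * C (a^2*b) * X^11 + 15 * C (a^2) * X^14 + 6 * C (a*b^5) * X
      + 30 * C (a*b^4) * X^4 + 60 * C (a*b^3) * X^7 + 60 * C (a*b^2) * X^10
      + 30 * C (a*b) * X^13 + 6 * C (a) * X^16 + C (b^6) + 6 * C (b^5) * X^3
      + 15 * C (b^4) * X^6 + 20 * C (b^3) * X^9 + 15 * C (b^2) * X^12
      + 6 * C (b) * X^15 + X^18 := by
    push_cast [C_mul, C_pow]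
    ring
  rw [h]
  simp only [coeff_add, coeff_C_mul, coeff_X_pow, coeff_X, coeff_C, mul_assoc,
    coeff_ofNat_mul]
  norm_num

lemma numeral_eq_aux (n m : ZMod 13) (h : n = m) :
    (MvPolynomial.C n : MvPolynomial (Fin 2) (ZMod 13)) = MvPolynomial.C m := by rw [h]

theorem Psi9_eq_two_mul_discriminant_mul_Hasse_mod_13
    (c₁ c₂ c₃ : ZMod 13)
    (hc₁ : c₁ = (-847 : ZMod 13) * (983040 : ZMod 13)⁻¹)
    (hc₂ : c₂ = (-2937 : ZMod 13) * (573440 : ZMod 13)⁻¹)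
    (hc₃ : c₃ = (33 : ZMod 13) * (7168 : ZMod 13)⁻¹) :
    MvPolynomial.C c₁ * (MvPolynomial.X 0 : MvPolynomial (Fin 2) (ZMod 13)) ^ 6
      + MvPolynomial.C c₂ * (MvPolynomial.X 0) ^ 3 * (MvPolynomial.X 1) ^ 2
      + MvPolynomial.C c₃ * (MvPolynomial.X 1) ^ 4
    = MvPolynomial.C 2
        * (4 * (MvPolynomial.X 0) ^ 3 + 27 * (MvPolynomial.X 1) ^ 2)
        * ((((X : Polynomial (MvPolynomial (Fin 2) (ZMod 13))) ^ 3
            + C (MvPolynomial.X 0) * X + C (MvPolynomial.X 1)) ^ 6).coeff 12) := by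
  have hc₁' : c₁ = 4 := by
    have hb : (983040 : ZMod 13)⁻¹ = 11 := ZMod.inv_eq_of_mul_eq_one 13 _ _ (show (983040 : ZMod 13) * 11 = 1 by decide)
    rw [hc₁, hb]; decide
  have hc₂' : c₂ = 4 := by
    have hb : (573440 : ZMod 13)⁻¹ = 4 := ZMod.inv_eq_of_mul_eq_one 13 _ _ (show (573440 : ZMod 13) * 4 = 1 by decide)
    rw [hc₂, hb]; decide
  have hc₃' : c₃ = 4 := by
    have hb : (7168 : ZMod 13)⁻¹ = 8 := ZMod.inv_eq_of_mul_eq_one 13 _ _ (show (7168 : ZMod 13) * 8 = 1 by decide)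
    rw [hc₃, hb]; decide
  subst hc₁' hc₂' hc₃'
  rw [coeff12_aux]
  have h160 : (160 : MvPolynomial (Fin 2) (ZMod 13)) = 4 := by
    calc (160 : MvPolynomial (Fin 2) (ZMod 13)) = MvPolynomial.C 160 :=
          (map_ofNat _ _).symm
      _ = MvPolynomial.C 4 := numeral_eq_aux _ _ (by decide)
      _ = 4 := map_ofNat _ _
  have h1200 : (1200 : MvPolynomial (Fin 2) (ZMod 13)) = 4 := by
    calc (1200 : MvPolynomial (Fin 2) (ZMod 13)) = MvPolynomial.C 1200 :=
          (map_ofNat _ _).symm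
      _ = MvPolynomial.C 4 := numeral_eq_aux _ _ (by decide)
      _ = 4 := map_ofNat _ _
  have h810 : (810 : MvPolynomial (Fin 2) (ZMod 13)) = 4 := by
    calc (810 : MvPolynomial (Fin 2) (ZMod 13)) = MvPolynomial.C 810 :=
          (map_ofNat _ _).symm
      _ = MvPolynomial.C 4 := numeral_eq_aux _ _ (by decide)
      _ = 4 := map_ofNat _ _
  have hC4 : (MvPolynomial.C (4 : ZMod 13) : MvPolynomial (Fin 2) (ZMod 13)) = 4 :=
    map_ofNat _ _
  have hC2 : (MvPolynomial.C (2 : ZMod 13) : MvPolynomial (Fin 2) (ZMod 13)) = 2 :=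
    map_ofNat _ _
  rw [hC4, hC2]
  linear_combination ((MvPolynomial.X 0 : MvPolynomial (Fin 2) (ZMod 13))^6) * h160.symm
    + ((MvPolynomial.X 0 : MvPolynomial (Fin 2) (ZMod 13))^3 * (MvPolynomial.X 1)^2) * h1200.symm
    + ((MvPolynomial.X 1 : MvPolynomial (Fin 2) (ZMod 13))^4) * h810.symm
end
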